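/- arXiv:2501.00928 — 5 statements merged into one kernel-verified Lean document; each statement's English description precedes it below -/
import Mathlib

section
/- Let Ω ⊂ ℝⁿ be a convex body, let (p_k)_{k∈ℕ} be a sequence in [1,∞) with p_k → ∞, and let (ω_k)_{k∈ℕ} be nonempty compact convex subsets of Ω converging, with respect to the Hausdorff distance, to a nonempty compact convex set ω ⊆ Ω. Then J_{p_k}(ω_k) → d^H(ω,Ω) as k → ∞. -/
open MeasureTheory Metric Filter Topology
open scoped ENNReal NNReal Pointwise

/-- Support function of a set `ω`, as a function of the direction `θ`. -/
noncomputable def suppFn {n : ℕ} (ω : Set (EuclideanSpace ℝ (Fin n)))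
    (θ : EuclideanSpace ℝ (Fin n)) : ℝ :=
  sSup ((fun y => (inner ℝ θ y : ℝ)) '' ω)

/-- The p-distance functional `J_p`. -/
noncomputable def Jp {n : ℕ} (Ω ω : Set (EuclideanSpace ℝ (Fin n))) (p : ℝ) : ℝ :=
  (∫ θ in sphere (0 : EuclideanSpace ℝ (Fin n)) 1,
      |suppFn Ω θ - suppFn ω θ| ^ p ∂(μH[(n : ℝ) - 1])) ^ (1 / p)

/-- The admissible class: nonempty compact convex subsets of `Ω` of volume `c`. -/
def Kc {n : ℕ} (Ω : Set (EuclideanSpace ℝ (Fin n))) (c : ℝ≥0∞) :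
    Set (Set (EuclideanSpace ℝ (Fin n))) :=
  {ω | ω.Nonempty ∧ IsCompact ω ∧ Convex ℝ ω ∧ ω ⊆ Ω ∧ volume ω = c}

/-!
Write `σ = μH[n-1]` on the unit sphere `S`. On `S`, `|h_Ω - h_{ω_k}| ≤ d^H(ω_k, Ω)`, so
`J_{p_k}(ω_k) ≤ σ(S)^{1/p_k} d^H(ω_k, Ω) → d^H(ω, Ω)`. Conversely, if `x ∈ Ω` is nearly farthest
from `ω` and `z` is its nearest point in the convex set `ω`, then `θ₀ = (x - z)/‖x - z‖` gives
`h_Ω(θ₀) - h_ω(θ₀) ≥ ‖x - z‖`. As support functions are continuous and `h_{ω_k} → h_ω` uniformly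
on `S`, the integrand stays above any `a < d^H(ω, Ω)` on a fixed cap around `θ₀`, whence
`J_{p_k}(ω_k) ≥ σ(cap)^{1/p_k} a → a`.

That `σ(S) < ∞` and `σ(cap) > 0` both come from the orthogonal projection onto `θ₀ᗮ`: it is
1-Lipschitz, it maps a cap onto a set containing a ball of `θ₀ᗮ`, and it is inverse-Lipschitz on
the cap `⟪θ₀, θ⟫ > 1/2`; finitely many such caps cover `S`.
-/

open Module Set

section SphereMeasure

variable {E : Type*} [NormedAddCommGroup E] [InnerProductSpace ℝ E]

lemma coe_orthogonalProjectionOnto_orthogonal_span_unit {v : E} (hv : ‖v‖ = 1) (w : E) :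
    ((ℝ ∙ v)ᗮ.orthogonalProjectionOnto w : E) = w - inner ℝ v w • v := by
  change (ℝ ∙ v)ᗮ.starProjection w = _
  rw [Submodule.starProjection_orthogonal_val, Submodule.starProjection_unit_singleton ℝ hv]

lemma norm_sq_eq_norm_sq_orthogonalProjectionOnto_add_inner_sq {v : E} (hv : ‖v‖ = 1) (w : E) :
    ‖w‖ ^ 2 = ‖((ℝ ∙ v)ᗮ.orthogonalProjectionOnto w : E)‖ ^ 2 + inner ℝ v w ^ 2 := by
  rw [coe_orthogonalProjectionOnto_orthogonal_span_unit hv, norm_sub_sq_real, inner_smul_right,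
    norm_smul, hv, real_inner_comm, Real.norm_eq_abs, mul_one, sq_abs]
  ring

lemma dist_le_three_mul_dist_orthogonalProjectionOnto {v : E} (hv : ‖v‖ = 1) {θ θ' : E}
    (hθ : ‖θ‖ = 1) (hθ' : ‖θ'‖ = 1) (ha : 1 / 2 < inner ℝ v θ) (ha' : 1 / 2 < inner ℝ v θ') :
    dist θ θ' ≤ 3 * dist ((ℝ ∙ v)ᗮ.orthogonalProjectionOnto θ)
      ((ℝ ∙ v)ᗮ.orthogonalProjectionOnto θ') := by
  set P := (ℝ ∙ v)ᗮ.orthogonalProjectionOnto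
  have hdecomp := norm_sq_eq_norm_sq_orthogonalProjectionOnto_add_inner_sq hv
  set s := dist (P θ) (P θ')
  have hs : ‖(P (θ - θ') : E)‖ = s := by
    rw [map_sub, Submodule.coe_sub, ← dist_eq_norm]; rfl
  have hnorm_sub : |‖(P θ : E)‖ - ‖(P θ' : E)‖| ≤ s := by
    rw [← hs, map_sub, Submodule.coe_sub]; exact abs_norm_sub_norm_le _ _
  have hθd := hdecomp θ
  have hθ'd := hdecomp θ'
  rw [hθ] at hθd; rw [hθ'] at hθ'd
  have hPθ : ‖(P θ : E)‖ ≤ 1 := by nlinarith [norm_nonneg (P θ : E)]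
  have hPθ' : ‖(P θ' : E)‖ ≤ 1 := by nlinarith [norm_nonneg (P θ' : E)]
  -- with `a = ⟪v, θ⟫`, `a' = ⟪v, θ'⟫`: `(a - a') (a + a') = ‖P θ'‖² - ‖P θ‖²` and `a + a' > 1`
  have hnormal : |inner ℝ v θ - inner ℝ v θ'| ≤ 2 * s := by
    have hs0 : 0 ≤ s := dist_nonneg
    obtain ⟨h1, h2⟩ := abs_le.1 hnorm_sub
    rw [abs_le]
    constructor <;> rcases le_total (inner ℝ v θ) (inner ℝ v θ') with h | h <;>
      nlinarith [norm_nonneg (P θ : E), norm_nonneg (P θ' : E)]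
  have hsq : dist θ θ' ^ 2 ≤ (3 * s) ^ 2 := by
    rw [dist_eq_norm, hdecomp, inner_sub_right]
    change ‖(P (θ - θ') : E)‖ ^ 2 + _ ≤ _
    rw [hs]
    nlinarith [abs_nonneg (inner ℝ v θ - inner ℝ v θ'), sq_abs (inner ℝ v θ - inner ℝ v θ')]
  exact (pow_le_pow_iff_left₀ dist_nonneg (by positivity) two_ne_zero).1 hsq

variable [FiniteDimensional ℝ E]

lemma finrank_orthogonal_span_unit {v : E} (hv : ‖v‖ = 1) :
    (finrank ℝ (ℝ ∙ v)ᗮ : ℝ) = finrank ℝ E - 1 := by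
  have hv0 : v ≠ 0 := by rintro rfl; simp at hv
  have h := (ℝ ∙ v).finrank_add_finrank_orthogonal
  rw [finrank_span_singleton hv0] at h
  rw [← h]; push_cast; ring

variable [MeasurableSpace E] [BorelSpace E]

lemma hausdorffMeasure_sphere_inter_ball_pos {v : E} (hv : ‖v‖ = 1) {δ : ℝ} (hδ : 0 < δ) :
    0 < μH[(finrank ℝ E : ℝ) - 1] (sphere (0 : E) 1 ∩ ball v δ) := by
  set K := (ℝ ∙ v)ᗮ
  obtain ⟨r, hr0, hr1, hrδ⟩ : ∃ r : ℝ, 0 < r ∧ r ≤ 1 / 2 ∧ 2 * r ^ 2 < δ ^ 2 :=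
    ⟨min 1 δ / 2, by positivity, by linarith [min_le_left 1 δ],
      by nlinarith [min_le_right 1 δ, lt_min one_pos hδ]⟩
  have hball : ball (0 : K) r ⊆ K.orthogonalProjectionOnto '' (sphere (0 : E) 1 ∩ ball v δ) := by
    intro w hw
    have hwr : ‖(w : E)‖ < r := by simpa using hw
    have hwv : inner ℝ v (w : E) = 0 :=
      Submodule.inner_right_of_mem_orthogonal (Submodule.mem_span_singleton_self v) w.2
    have hw1 : ‖(w : E)‖ ≤ 1 / 2 := by linarith
    set c := √(1 - ‖(w : E)‖ ^ 2)
    have hc : c ^ 2 = 1 - ‖(w : E)‖ ^ 2 := Real.sq_sqrt (by nlinarith [norm_nonneg (w : E)])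
    have hinner (t : ℝ) : inner ℝ v ((w : E) + t • v) = t := by
      rw [inner_add_right, hwv, inner_smul_right, real_inner_self_eq_norm_sq, hv]; ring
    have hproj (t : ℝ) : ((K.orthogonalProjectionOnto ((w : E) + t • v) : K) : E) = w := by
      rw [coe_orthogonalProjectionOnto_orthogonal_span_unit hv, hinner]; simp
    have hnorm (t : ℝ) : ‖(w : E) + t • v‖ ^ 2 = ‖(w : E)‖ ^ 2 + t ^ 2 := by
      rw [norm_sq_eq_norm_sq_orthogonalProjectionOnto_add_inner_sq hv, hproj, hinner]
    refine ⟨(w : E) + c • v, ⟨?_, ?_⟩, Subtype.ext (hproj c)⟩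
    · rw [mem_sphere_zero_iff_norm, ← pow_eq_one_iff_of_nonneg (norm_nonneg _) two_ne_zero, hnorm,
        hc]
      ring
    · have hc0 : 0 ≤ c := Real.sqrt_nonneg _
      have hc1 : 1 - c ≤ ‖(w : E)‖ ^ 2 := by nlinarith
      have h2 : ‖(w : E) + (c - 1) • v‖ ^ 2 < δ ^ 2 := by
        rw [hnorm]
        nlinarith [norm_nonneg (w : E)]
      rw [mem_ball, dist_eq_norm, add_sub_assoc, show c • v - v = (c - 1) • v by
        rw [sub_smul, one_smul]]
      exact (pow_lt_pow_iff_left₀ (norm_nonneg _) hδ.le two_ne_zero).1 h2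
  calc (0 : ℝ≥0∞) < μH[(finrank ℝ K : ℝ)] (ball (0 : K) r) :=
        measure_ball_pos _ _ hr0
    _ ≤ μH[(finrank ℝ K : ℝ)] (K.orthogonalProjectionOnto '' (sphere (0 : E) 1 ∩ ball v δ)) :=
        measure_mono hball
    _ ≤ _ := by
        rw [finrank_orthogonal_span_unit hv]
        exact hausdorffMeasure_orthogonalProjectionOnto_le K _ _ (by
          rw [← finrank_orthogonal_span_unit hv]; positivity)

lemma hausdorffMeasure_sphere_inter_halfspace_lt_top {v : E} (hv : ‖v‖ = 1) :
    μH[(finrank ℝ E : ℝ) - 1] (sphere (0 : E) 1 ∩ {θ | 1 / 2 < inner ℝ v θ}) < ∞ := by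
  set K := (ℝ ∙ v)ᗮ
  set C := sphere (0 : E) 1 ∩ {θ | 1 / 2 < inner ℝ v θ}
  let f : C → K := fun θ => K.orthogonalProjectionOnto θ
  have hf : AntilipschitzWith 3 f := AntilipschitzWith.of_le_mul_dist fun θ θ' =>
    dist_le_three_mul_dist_orthogonalProjectionOnto hv (norm_eq_of_mem_sphere ⟨_, θ.2.1⟩)
      (norm_eq_of_mem_sphere ⟨_, θ'.2.1⟩) θ.2.2 θ'.2.2
  have himage : f '' univ ⊆ closedBall 0 1 := by
    rintro _ ⟨θ, -, rfl⟩
    rw [mem_closedBall_zero_iff, ← norm_eq_of_mem_sphere ⟨_, θ.2.1⟩]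
    exact K.norm_orthogonalProjectionOnto_apply_le _
  have hd : 0 ≤ (finrank ℝ E : ℝ) - 1 := by
    rw [← finrank_orthogonal_span_unit hv]; positivity
  calc μH[(finrank ℝ E : ℝ) - 1] C = μH[(finrank ℝ E : ℝ) - 1] (univ : Set C) := by
        rw [← (isometry_subtype_coe (s := C)).hausdorffMeasure_image (Or.inl hd) univ,
          image_univ, Subtype.range_coe]
    _ ≤ (3 : ℝ≥0∞) ^ ((finrank ℝ E : ℝ) - 1) * μH[(finrank ℝ E : ℝ) - 1] (f '' univ) := by
        simpa using hf.le_hausdorffMeasure_image hd univ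
    _ ≤ (3 : ℝ≥0∞) ^ ((finrank ℝ E : ℝ) - 1) * μH[(finrank ℝ E : ℝ) - 1] (closedBall (0 : K) 1) :=
        by gcongr
    _ < ∞ := by
        rw [← finrank_orthogonal_span_unit hv]
        exact ENNReal.mul_lt_top (by simp) measure_closedBall_lt_top

lemma hausdorffMeasure_sphere_lt_top : μH[(finrank ℝ E : ℝ) - 1] (sphere (0 : E) 1) < ∞ := by
  obtain ⟨t, ht⟩ := (isCompact_sphere (0 : E) 1).elim_finite_subcover
    (fun v : sphere (0 : E) 1 => {θ : E | 1 / 2 < inner ℝ (v : E) θ})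
    (fun v => isOpen_lt continuous_const (continuous_const.inner continuous_id))
    (fun θ hθ => mem_iUnion.2 ⟨⟨θ, hθ⟩, by
      simp [norm_eq_of_mem_sphere ⟨θ, hθ⟩]; norm_num⟩)
  refine (measure_mono fun θ hθ => ?_).trans_lt (measure_biUnion_lt_top t.finite_toSet
    fun v _ => hausdorffMeasure_sphere_inter_halfspace_lt_top (norm_eq_of_mem_sphere v))
  obtain ⟨v, hv, hθv⟩ := mem_iUnion₂.1 (ht hθ)
  exact mem_biUnion hv ⟨hθ, hθv⟩

end SphereMeasure

section LpNormLimit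

variable {X : Type*} [MeasurableSpace X] {μ : Measure X} {g : X → ℝ} {q : ℝ}

lemma integral_rpow_rpow_one_div_le [IsFiniteMeasure μ] (hq : 0 < q) (hg : ∀ x, 0 ≤ g x) {M : ℝ}
    (hM : 0 ≤ M) (hgM : ∀ᵐ x ∂μ, g x ≤ M) :
    (∫ x, g x ^ q ∂μ) ^ (1 / q) ≤ μ.real univ ^ (1 / q) * M := by
  have hbound : ∫ x, g x ^ q ∂μ ≤ μ.real univ * M ^ q := by
    rw [← smul_eq_mul, ← integral_const]
    exact integral_mono_of_nonneg (ae_of_all _ fun x => Real.rpow_nonneg (hg x) q)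
      (integrable_const _) (hgM.mono fun x hx => Real.rpow_le_rpow (hg x) hx hq.le)
  calc (∫ x, g x ^ q ∂μ) ^ (1 / q) ≤ (μ.real univ * M ^ q) ^ (1 / q) := by
        gcongr; exact integral_nonneg fun x => Real.rpow_nonneg (hg x) q
    _ = μ.real univ ^ (1 / q) * M := by
        rw [Real.mul_rpow measureReal_nonneg (by positivity), ← Real.rpow_mul hM,
          mul_one_div_cancel hq.ne', Real.rpow_one]

lemma rpow_one_div_mul_le_integral_rpow_rpow_one_div (hq : 0 < q) (hg : ∀ x, 0 ≤ g x)
    (hint : Integrable (fun x => g x ^ q) μ) {U : Set X} (hU : MeasurableSet U) (hμU : μ U ≠ ∞)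
    {a : ℝ} (ha : 0 ≤ a) (hgU : ∀ x ∈ U, a ≤ g x) :
    μ.real U ^ (1 / q) * a ≤ (∫ x, g x ^ q ∂μ) ^ (1 / q) := by
  have hbound : a ^ q * μ.real U ≤ ∫ x, g x ^ q ∂μ :=
    (setIntegral_ge_of_const_le_real hU hμU
      (fun x hx => Real.rpow_le_rpow ha (hgU x hx) hq.le) hint.integrableOn).trans
      (setIntegral_le_integral hint (ae_of_all _ fun x => Real.rpow_nonneg (hg x) q))
  calc μ.real U ^ (1 / q) * a = (a ^ q * μ.real U) ^ (1 / q) := by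
        rw [Real.mul_rpow (by positivity) measureReal_nonneg, ← Real.rpow_mul ha,
          mul_one_div_cancel hq.ne', Real.rpow_one, mul_comm]
    _ ≤ (∫ x, g x ^ q ∂μ) ^ (1 / q) := by gcongr

lemma tendsto_rpow_one_div_of_tendsto_atTop {p : ℕ → ℝ} (hp : Tendsto p atTop atTop) {c : ℝ}
    (hc : 0 < c) : Tendsto (fun k => c ^ (1 / p k)) atTop (𝓝 1) := by
  have h := (Real.continuousAt_const_rpow hc.ne').tendsto.comp
    (tendsto_inv_atTop_zero.comp hp)
  simpa only [Function.comp_def, one_div, Real.rpow_zero] using h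

theorem tendsto_integral_rpow_rpow_one_div [IsFiniteMeasure μ] {p : ℕ → ℝ}
    (hp : Tendsto p atTop atTop) {g : ℕ → X → ℝ} (hg : ∀ k, AEMeasurable (g k) μ)
    (hg0 : ∀ k x, 0 ≤ g k x) {M : ℕ → ℝ} {L : ℝ} (hM0 : ∀ k, 0 ≤ M k)
    (hM : Tendsto M atTop (𝓝 L)) (hgM : ∀ k, ∀ᵐ x ∂μ, g k x ≤ M k)
    (hlower : ∀ a, 0 < a → a < L →
      ∃ U, MeasurableSet U ∧ μ U ≠ 0 ∧ ∀ᶠ k in atTop, ∀ x ∈ U, a ≤ g k x) :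
    Tendsto (fun k => (∫ x, g k x ^ p k ∂μ) ^ (1 / p k)) atTop (𝓝 L) := by
  have hp0 : ∀ᶠ k in atTop, 0 < p k := hp.eventually_gt_atTop 0
  refine tendsto_order.2 ⟨fun a' ha' => ?_, fun b hb => ?_⟩
  · rcases lt_or_ge a' 0 with ha'0 | ha'0
    · exact Eventually.of_forall fun k => ha'0.trans_le
        (Real.rpow_nonneg (integral_nonneg fun x => Real.rpow_nonneg (hg0 k x) _) _)
    obtain ⟨U, hU, hμU, hgU⟩ := hlower ((a' + L) / 2) (by linarith) (by linarith)
    have hUpos : 0 < μ.real U := ENNReal.toReal_pos hμU (measure_ne_top μ U)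
    have hlim := (tendsto_rpow_one_div_of_tendsto_atTop hp hUpos).mul_const ((a' + L) / 2)
    rw [one_mul] at hlim
    filter_upwards [hlim.eventually_const_lt (by linarith : a' < (a' + L) / 2), hgU, hp0]
      with k hk hkU hk0
    refine hk.trans_le (rpow_one_div_mul_le_integral_rpow_rpow_one_div hk0 (hg0 k) ?_ hU
      (measure_ne_top μ U) (by linarith) hkU)
    exact Integrable.of_bound ((hg k).pow_const _).aestronglyMeasurable (M k ^ p k)
      ((hgM k).mono fun x hx => by
        rw [Real.norm_of_nonneg (Real.rpow_nonneg (hg0 k x) _)]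
        exact Real.rpow_le_rpow (hg0 k x) hx hk0.le)
  · -- the base `max 1 (μ univ)` keeps the bound useful when `μ = 0`
    have hlim := (tendsto_rpow_one_div_of_tendsto_atTop hp
      (lt_max_of_lt_left one_pos : (0 : ℝ) < max 1 (μ.real univ))).mul hM
    rw [one_mul] at hlim
    filter_upwards [hlim.eventually_lt_const hb, hp0] with k hk hk0
    refine lt_of_le_of_lt ?_ hk
    calc (∫ x, g k x ^ p k ∂μ) ^ (1 / p k) ≤ μ.real univ ^ (1 / p k) * M k :=
          integral_rpow_rpow_one_div_le hk0 (hg0 k) (hM0 k) (hgM k)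
      _ ≤ max 1 (μ.real univ) ^ (1 / p k) * M k := by
          gcongr
          · exact hM0 k
          · exact le_max_right _ _

end LpNormLimit

section HausdorffDist

variable {α : Type*} [PseudoMetricSpace α]

lemma abs_hausdorffDist_sub_hausdorffDist_le {s t : Set α}
    (h : hausdorffEDist s t ≠ ⊤) (u : Set α) :
    |hausdorffDist s u - hausdorffDist t u| ≤ hausdorffDist s t := by
  have h₁ := hausdorffDist_triangle (u := u) h
  have h₂ := hausdorffDist_triangle (u := u) (hausdorffEDist_comm (s := s) ▸ h)
  rw [hausdorffDist_comm (s := t) (t := s)] at h₂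
  exact abs_sub_le_iff.2 ⟨by linarith, by linarith⟩

lemma tendsto_hausdorffDist_of_tendsto_hausdorffDist_zero {ι : Type*} {l : Filter ι}
    {s : ι → Set α} {t : Set α} (hfin : ∀ i, hausdorffEDist (s i) t ≠ ⊤)
    (h : Tendsto (fun i => hausdorffDist (s i) t) l (𝓝 0)) (u : Set α) :
    Tendsto (fun i => hausdorffDist (s i) u) l (𝓝 (hausdorffDist t u)) := by
  refine tendsto_iff_dist_tendsto_zero.2 (squeeze_zero (fun i => dist_nonneg) (fun i => ?_) h)
  rw [Real.dist_eq]
  exact abs_hausdorffDist_sub_hausdorffDist_le (hfin i) u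

end HausdorffDist

section SupportFunction

variable {n : ℕ}

local notation "E" => EuclideanSpace ℝ (Fin n)

lemma inner_le_suppFn {A : Set E} (hA : IsCompact A) {y : E} (hy : y ∈ A) (θ : E) :
    inner ℝ θ y ≤ suppFn A θ :=
  le_csSup (hA.image (continuous_const.inner continuous_id)).bddAbove ⟨y, hy, rfl⟩

lemma suppFn_le {A : Set E} (hA : A.Nonempty) {θ : E} {c : ℝ}
    (h : ∀ y ∈ A, inner ℝ θ y ≤ c) : suppFn A θ ≤ c :=
  csSup_le (hA.image _) (forall_mem_image.2 h)

lemma exists_suppFn_eq {A : Set E} (hne : A.Nonempty) (hA : IsCompact A) (θ : E) :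
    ∃ y ∈ A, suppFn A θ = inner ℝ θ y := by
  obtain ⟨y, hy, hmax⟩ :=
    hA.exists_isMaxOn hne (continuous_const.inner continuous_id : Continuous fun y : E =>
      inner ℝ θ y).continuousOn
  exact ⟨y, hy, le_antisymm (suppFn_le hne fun z hz => hmax hz) (inner_le_suppFn hA hy θ)⟩

lemma continuous_suppFn {A : Set E} (hne : A.Nonempty) (hA : IsCompact A) :
    Continuous (suppFn A) := by
  obtain ⟨R, hR⟩ := hA.isBounded.exists_norm_le
  refine (LipschitzWith.of_le_add_mul' R fun θ₁ θ₂ => ?_).continuous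
  obtain ⟨y, hy, hyθ⟩ := exists_suppFn_eq hne hA θ₁
  calc suppFn A θ₁ = inner ℝ θ₂ y + inner ℝ (θ₁ - θ₂) y := by
        rw [hyθ, inner_sub_left]; ring
    _ ≤ suppFn A θ₂ + ‖θ₁ - θ₂‖ * R := by
        gcongr
        · exact inner_le_suppFn hA hy θ₂
        · exact (real_inner_le_norm _ _).trans (by gcongr; exact hR y hy)
    _ = suppFn A θ₂ + R * dist θ₁ θ₂ := by rw [dist_eq_norm, mul_comm]

lemma suppFn_le_add_norm_mul_hausdorffDist {A B : Set E} (hAne : A.Nonempty) (hA : IsCompact A)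
    (hBne : B.Nonempty) (hB : IsCompact B) (θ : E) :
    suppFn A θ ≤ suppFn B θ + ‖θ‖ * hausdorffDist A B := by
  obtain ⟨y, hy, hyθ⟩ := exists_suppFn_eq hAne hA θ
  obtain ⟨z, hz, hyz⟩ := hB.exists_infDist_eq_dist hBne y
  have hdist : ‖y - z‖ ≤ hausdorffDist A B := by
    rw [← dist_eq_norm, ← hyz]
    exact infDist_le_hausdorffDist_of_mem hy
      (hausdorffEDist_ne_top_of_nonempty_of_bounded hAne hBne hA.isBounded hB.isBounded)
  calc suppFn A θ = inner ℝ θ z + inner ℝ θ (y - z) := by rw [hyθ, inner_sub_right]; ring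
    _ ≤ suppFn B θ + ‖θ‖ * ‖y - z‖ := add_le_add (inner_le_suppFn hB hz θ) (real_inner_le_norm _ _)
    _ ≤ suppFn B θ + ‖θ‖ * hausdorffDist A B := by gcongr

lemma abs_suppFn_sub_suppFn_le {A B : Set E} (hAne : A.Nonempty) (hA : IsCompact A)
    (hBne : B.Nonempty) (hB : IsCompact B) (θ : E) :
    |suppFn A θ - suppFn B θ| ≤ ‖θ‖ * hausdorffDist A B := by
  have h₁ := suppFn_le_add_norm_mul_hausdorffDist hAne hA hBne hB θ
  have h₂ := suppFn_le_add_norm_mul_hausdorffDist hBne hB hAne hA θ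
  rw [hausdorffDist_comm] at h₂
  exact abs_sub_le_iff.2 ⟨by linarith, by linarith⟩

/-- The direction from the nearest point of `A` to `x` separates `x` from `A`. -/
lemma exists_infDist_le_suppFn_sub {A B : Set E} (hAne : A.Nonempty) (hA : IsCompact A)
    (hAconv : Convex ℝ A) (hB : IsCompact B) {x : E} (hxB : x ∈ B) (hxA : x ∉ A) :
    ∃ θ ∈ sphere (0 : E) 1, infDist x A ≤ suppFn B θ - suppFn A θ := by
  obtain ⟨z, hz, hxz⟩ := hA.exists_infDist_eq_dist hAne x
  have hR : 0 < ‖x - z‖ := norm_pos_iff.2 (sub_ne_zero.2 fun h => hxA (h ▸ hz))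
  have hproj : ∀ w ∈ A, inner ℝ (x - z) (w - z) ≤ 0 :=
    (norm_eq_iInf_iff_real_inner_le_zero hAconv hz).1 (by
      rw [← dist_eq_norm, ← hxz, infDist_eq_iInf]; simp only [dist_eq_norm])
  set θ := ‖x - z‖⁻¹ • (x - z)
  have hθ (w : E) : inner ℝ θ w - inner ℝ θ z = ‖x - z‖⁻¹ * inner ℝ (x - z) (w - z) := by
    rw [real_inner_smul_left, real_inner_smul_left, inner_sub_right]; ring
  have hA_le : suppFn A θ ≤ inner ℝ θ z := suppFn_le hAne fun w hw => by
    nlinarith [hθ w, hproj w hw, inv_pos.2 hR]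
  have hx : inner ℝ θ x - inner ℝ θ z = ‖x - z‖ := by
    rw [hθ, real_inner_self_eq_norm_sq]; field_simp
  refine ⟨θ, ?_, ?_⟩
  · rw [mem_sphere_zero_iff_norm, norm_smul, norm_inv, norm_norm, inv_mul_cancel₀ hR.ne']
  · linarith [inner_le_suppFn hB hxB θ, dist_eq_norm x z]

lemma exists_lt_suppFn_sub_of_subset {A B : Set E} (hAne : A.Nonempty) (hA : IsCompact A)
    (hAconv : Convex ℝ A) (hB : IsCompact B) (hAB : A ⊆ B) {r : ℝ} (hr0 : 0 ≤ r)
    (hr : r < hausdorffDist A B) :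
    ∃ θ ∈ sphere (0 : E) 1, r < suppFn B θ - suppFn A θ := by
  by_contra! H
  refine hr.not_ge (hausdorffDist_le_of_infDist hr0
    (fun x hx => by rw [infDist_zero_of_mem (hAB hx)]; exact hr0) fun x hx => ?_)
  by_contra! hxr
  have hxA : x ∉ A := fun h => by rw [infDist_zero_of_mem h] at hxr; linarith
  obtain ⟨θ, hθ, hle⟩ := exists_infDist_le_suppFn_sub hAne hA hAconv hB hx hxA
  linarith [H θ hθ]

lemma exists_ball_eventually_le_abs_suppFn_sub {Ω ωlim : Set E} {ω : ℕ → Set E}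
    (hΩ : IsCompact Ω) (hne : ωlim.Nonempty) (hc : IsCompact ωlim) (hcv : Convex ℝ ωlim)
    (hsub : ωlim ⊆ Ω) (hωne : ∀ k, (ω k).Nonempty) (hω : ∀ k, IsCompact (ω k))
    (hlim : Tendsto (fun k => hausdorffDist (ω k) ωlim) atTop (𝓝 0)) {a : ℝ} (ha : 0 < a)
    (haL : a < hausdorffDist ωlim Ω) :
    ∃ θ₀ ∈ sphere (0 : E) 1, ∃ δ > 0, ∀ᶠ k in atTop, ∀ θ ∈ sphere (0 : E) 1 ∩ ball θ₀ δ,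
      a ≤ |suppFn Ω θ - suppFn (ω k) θ| := by
  set L := hausdorffDist ωlim Ω
  have hΩne : Ω.Nonempty := hne.mono hsub
  obtain ⟨θ₀, hθ₀, hgt⟩ := exists_lt_suppFn_sub_of_subset hne hc hcv hΩ hsub
    (r := (a + L) / 2) (by linarith) (by linarith)
  have hopen : IsOpen {θ | (a + L) / 2 < suppFn Ω θ - suppFn ωlim θ} :=
    isOpen_lt continuous_const ((continuous_suppFn hΩne hΩ).sub (continuous_suppFn hne hc))
  obtain ⟨δ, hδ, hball⟩ := Metric.isOpen_iff.1 hopen θ₀ hgt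
  refine ⟨θ₀, hθ₀, δ, hδ, ?_⟩
  filter_upwards [hlim.eventually_lt_const (by linarith : (0 : ℝ) < (L - a) / 2)]
    with k hk θ ⟨hθ, hθδ⟩
  have hθL : (a + L) / 2 < suppFn Ω θ - suppFn ωlim θ := hball hθδ
  have hωk := abs_suppFn_sub_suppFn_le (hωne k) (hω k) hne hc θ
  rw [norm_eq_of_mem_sphere ⟨θ, hθ⟩, one_mul] at hωk
  linarith [le_abs_self (suppFn Ω θ - suppFn (ω k) θ), abs_le.1 hωk]

end SupportFunction

theorem Jp_tendsto_hausdorffDist_general {n : ℕ} (Ω : Set (EuclideanSpace ℝ (Fin n)))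
    (hΩcomp : IsCompact Ω)
    (p : ℕ → ℝ) (hptop : Tendsto p atTop atTop)
    (ω : ℕ → Set (EuclideanSpace ℝ (Fin n)))
    (hωne : ∀ k, (ω k).Nonempty) (hωcomp : ∀ k, IsCompact (ω k))
    (ωlim : Set (EuclideanSpace ℝ (Fin n)))
    (hlimne : ωlim.Nonempty) (hlimcomp : IsCompact ωlim) (hlimconv : Convex ℝ ωlim)
    (hlimsub : ωlim ⊆ Ω)
    (hconv : Tendsto (fun k => hausdorffDist (ω k) ωlim) atTop (𝓝 0)) :
    Tendsto (fun k => Jp Ω (ω k) (p k)) atTop (𝓝 (hausdorffDist ωlim Ω)) := by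
  have hΩne : Ω.Nonempty := hlimne.mono hlimsub
  have hdim : (finrank ℝ (EuclideanSpace ℝ (Fin n)) : ℝ) = n := by
    rw [finrank_euclideanSpace_fin]
  have hS : MeasurableSet (sphere (0 : EuclideanSpace ℝ (Fin n)) 1) :=
    isClosed_sphere.measurableSet
  have := isFiniteMeasure_restrict.2 (hdim ▸ hausdorffMeasure_sphere_lt_top.ne :
    μH[(n : ℝ) - 1] (sphere (0 : EuclideanSpace ℝ (Fin n)) 1) ≠ ∞)
  refine tendsto_integral_rpow_rpow_one_div (M := fun k => hausdorffDist (ω k) Ω) hptop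
    (fun k => ((continuous_suppFn hΩne hΩcomp).sub
      (continuous_suppFn (hωne k) (hωcomp k))).abs.aemeasurable)
    (fun k θ => abs_nonneg _) (fun k => hausdorffDist_nonneg)
    (tendsto_hausdorffDist_of_tendsto_hausdorffDist_zero (fun k =>
      hausdorffEDist_ne_top_of_nonempty_of_bounded (hωne k) hlimne (hωcomp k).isBounded
        hlimcomp.isBounded) hconv Ω)
    (fun k => ?_) fun a ha haL => ?_
  · refine (ae_restrict_iff' hS).2 (Eventually.of_forall fun θ hθ => ?_)
    have h := abs_suppFn_sub_suppFn_le hΩne hΩcomp (hωne k) (hωcomp k) θ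
    rwa [norm_eq_of_mem_sphere ⟨θ, hθ⟩, one_mul, hausdorffDist_comm] at h
  · obtain ⟨θ₀, hθ₀, δ, hδ, hev⟩ := exists_ball_eventually_le_abs_suppFn_sub hΩcomp hlimne
      hlimcomp hlimconv hlimsub hωne hωcomp hconv ha haL
    refine ⟨sphere 0 1 ∩ ball θ₀ δ, hS.inter measurableSet_ball, ?_, hev⟩
    rw [Measure.restrict_apply (hS.inter measurableSet_ball), inter_right_comm, inter_self]
    exact (hdim ▸ hausdorffMeasure_sphere_inter_ball_pos (norm_eq_of_mem_sphere ⟨θ₀, hθ₀⟩) hδ).ne'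

/-- If `p_k → ∞` and `ω_k → ω` in the Hausdorff distance (all sets being nonempty compact
convex subsets of the convex body `Ω`), then `J_{p_k}(ω_k) → d^H(ω, Ω)`. -/
theorem Jp_tendsto_hausdorffDist {n : ℕ} (Ω : Set (EuclideanSpace ℝ (Fin n)))
    (hΩcomp : IsCompact Ω) (hΩconv : Convex ℝ Ω) (hΩint : (interior Ω).Nonempty)
    (p : ℕ → ℝ) (hp : ∀ k, 1 ≤ p k) (hptop : Tendsto p atTop atTop)
    (ω : ℕ → Set (EuclideanSpace ℝ (Fin n)))
    (hωne : ∀ k, (ω k).Nonempty) (hωcomp : ∀ k, IsCompact (ω k))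
    (hωconv : ∀ k, Convex ℝ (ω k)) (hωsub : ∀ k, ω k ⊆ Ω)
    (ωlim : Set (EuclideanSpace ℝ (Fin n)))
    (hlimne : ωlim.Nonempty) (hlimcomp : IsCompact ωlim) (hlimconv : Convex ℝ ωlim)
    (hlimsub : ωlim ⊆ Ω)
    (hconv : Tendsto (fun k => hausdorffDist (ω k) ωlim) atTop (𝓝 0)) :
    Tendsto (fun k => Jp Ω (ω k) (p k)) atTop (𝓝 (hausdorffDist ωlim Ω)) :=
  Jp_tendsto_hausdorffDist_general Ω hΩcomp p hptop ω hωne hωcomp ωlim hlimne hlimcomp hlimconv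
    hlimsub hconv
end

section
/- Let Ω ⊂ ℝⁿ be a convex body and let c ∈ [0,|Ω|]. Let (p_k)_{k∈ℕ} ⊂ [1,∞) with p_k → ∞, and for each k let ω_k be a minimizer of J_{p_k} over K_c := { ω ⊆ Ω nonempty compact convex : |ω| = c }. If ω_k → ω* in the Hausdorff distance, then ω* ∈ K_c and ω* minimizes d^H(·,Ω) over K_c, i.e. d^H(ω*,Ω) ≤ d^H(ω,Ω) for every ω ∈ K_c. -/
open MeasureTheory Metric Filter Topology
open scoped ENNReal NNReal Pointwise

/-!
Inclusion in `Ω` and convexity pass to Hausdorff limits. The limit has volume at least `c`, since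
`ω_k` lies in a shrinking closed thickening of `ω*`, and at most `c`: a convex set without interior
is null, and once `ω*` has interior, a homothetic copy of `ω*` with ratio close to `1` sits inside
every nearby convex body, because support functions differ by at most the Hausdorff distance.
Hence `ω* ∈ K_c`.

For a convex body, `M := d^H(ω*, Ω)` is the supremum of `|h_Ω - h_ω*|` over the sphere, so this
difference exceeds `M - δ/2` on a relatively open set `U` of positive `H^{n-1}`-measure, and then
`|h_Ω - h_ω_k| ≥ M - δ` on `U` as soon as `d^H(ω_k, ω*) < δ/2`. Comparing with any `ω' ∈ K_c`,
`(M - δ) H(U)^{1/p_k} ≤ J_{p_k}(ω_k) ≤ J_{p_k}(ω') ≤ d^H(ω', Ω) H(S^{n-1})^{1/p_k}`,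
and `p_k → ∞` gives `M - δ ≤ d^H(ω', Ω)`.

That `H^{n-1}` is finite on the sphere and positive on its relatively open subsets follows from
covering the sphere by finitely many graph charts over balls of `ℝ^{n-1}`, where `H^{n-1}` is an
additive Haar measure.
-/

open Set
open scoped RealInnerProductSpace

lemma infDist_le_hausdorffDist_of_isCompact {α : Type*} [MetricSpace α] {s t : Set α}
    (hs : IsCompact s) (hsne : s.Nonempty) (ht : IsCompact t) (htne : t.Nonempty) {x : α}
    (hx : x ∈ s) : infDist x t ≤ hausdorffDist s t :=
  infDist_le_hausdorffDist_of_mem hx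
    (hausdorffEDist_ne_top_of_nonempty_of_bounded hsne htne hs.isBounded ht.isBounded)

section SupportFunction

variable {n : ℕ} {K L : Set (EuclideanSpace ℝ (Fin n))} {x : EuclideanSpace ℝ (Fin n)}

lemma le_suppFn (hK : IsCompact K) (hx : x ∈ K) (θ : EuclideanSpace ℝ (Fin n)) :
    ⟪θ, x⟫ ≤ suppFn K θ :=
  le_csSup (hK.image (continuous_const.inner continuous_id)).bddAbove ⟨x, hx, rfl⟩

lemma suppFn_le_s4 (hK : K.Nonempty) {θ : EuclideanSpace ℝ (Fin n)} {b : ℝ}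
    (h : ∀ x ∈ K, ⟪θ, x⟫ ≤ b) : suppFn K θ ≤ b :=
  csSup_le (hK.image _) (by rintro _ ⟨x, hx, rfl⟩; exact h x hx)

lemma continuous_suppFn_s4 (hK : K.Nonempty) (hKc : IsCompact K) : Continuous (suppFn K) := by
  obtain ⟨R, hR⟩ := hKc.isBounded.exists_norm_le
  refine (LipschitzWith.of_le_add_mul R.toNNReal fun θ θ' => suppFn_le_s4 hK fun x hx => ?_).continuous
  calc ⟪θ, x⟫ = ⟪θ', x⟫ + ⟪θ - θ', x⟫ := by rw [inner_sub_left]; ring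
    _ ≤ suppFn K θ' + R.toNNReal * dist θ θ' := by
      gcongr
      · exact le_suppFn hKc hx θ'
      · rw [dist_eq_norm, mul_comm]
        exact (real_inner_le_norm _ _).trans
          (mul_le_mul_of_nonneg_left ((hR x hx).trans (Real.le_coe_toNNReal R)) (norm_nonneg _))

lemma suppFn_sub_suppFn_le (hK : K.Nonempty) (hKc : IsCompact K) (hL : L.Nonempty)
    (hLc : IsCompact L) (θ : EuclideanSpace ℝ (Fin n)) :
    suppFn K θ - suppFn L θ ≤ ‖θ‖ * hausdorffDist K L := by
  rw [sub_le_iff_le_add]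
  refine suppFn_le_s4 hK fun x hx => ?_
  obtain ⟨y, hy, hxy⟩ := hLc.exists_infDist_eq_dist hL x
  have hdist : dist x y ≤ hausdorffDist K L :=
    hxy ▸ infDist_le_hausdorffDist_of_isCompact hKc hK hLc hL hx
  calc ⟪θ, x⟫ = ⟪θ, x - y⟫ + ⟪θ, y⟫ := by rw [inner_sub_right]; ring
    _ ≤ ‖θ‖ * hausdorffDist K L + suppFn L θ := by
      gcongr
      · exact (real_inner_le_norm _ _).trans
          (mul_le_mul_of_nonneg_left (dist_eq_norm x y ▸ hdist) (norm_nonneg _))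
      · exact le_suppFn hLc hy θ

lemma abs_suppFn_sub_suppFn_le_s4 (hK : K.Nonempty) (hKc : IsCompact K) (hL : L.Nonempty)
    (hLc : IsCompact L) (θ : EuclideanSpace ℝ (Fin n)) :
    |suppFn K θ - suppFn L θ| ≤ ‖θ‖ * hausdorffDist K L :=
  abs_sub_le_iff.2 ⟨suppFn_sub_suppFn_le hK hKc hL hLc θ,
    hausdorffDist_comm (s := K) ▸ suppFn_sub_suppFn_le hL hLc hK hKc θ⟩

lemma exists_norm_eq_one_suppFn_add_infDist_le (hL : L.Nonempty) (hLc : IsCompact L)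
    (hLconv : Convex ℝ L) (hx : x ∉ L) :
    ∃ θ : EuclideanSpace ℝ (Fin n), ‖θ‖ = 1 ∧ suppFn L θ + infDist x L ≤ ⟪θ, x⟫ := by
  obtain ⟨y, hy, hxy⟩ := hLc.exists_infDist_eq_dist hL x
  have hu : 0 < ‖x - y‖ := norm_pos_iff.2 (sub_ne_zero.2 fun h => hx (h ▸ hy))
  have hobtuse : ∀ w ∈ L, ⟪x - y, w - y⟫ ≤ 0 := by
    refine (norm_eq_iInf_iff_real_inner_le_zero hLconv hy).1 ?_
    simpa only [infDist_eq_iInf, dist_eq_norm] using hxy.symm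
  refine ⟨‖x - y‖⁻¹ • (x - y), by rw [norm_smul, norm_inv, norm_norm, inv_mul_cancel₀ hu.ne'], ?_⟩
  rw [hxy, dist_eq_norm, ← le_sub_iff_add_le]
  refine suppFn_le_s4 hL fun w hw => ?_
  have hw' : ⟪x - y, w⟫ ≤ ⟪x - y, x⟫ - ‖x - y‖ ^ 2 := by
    have := hobtuse w hw
    rw [← real_inner_self_eq_norm_sq]
    simp only [inner_sub_right, inner_sub_left] at this ⊢
    linarith
  rw [real_inner_smul_left, real_inner_smul_left]
  calc ‖x - y‖⁻¹ * ⟪x - y, w⟫ ≤ ‖x - y‖⁻¹ * (⟪x - y, x⟫ - ‖x - y‖ ^ 2) := by gcongr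
    _ = ‖x - y‖⁻¹ * ⟪x - y, x⟫ - ‖x - y‖ := by field_simp

lemma infDist_le_of_suppFn_sub_suppFn_le (hKc : IsCompact K) (hL : L.Nonempty)
    (hLc : IsCompact L) (hLconv : Convex ℝ L) {b : ℝ} (hb : 0 ≤ b)
    (h : ∀ θ : EuclideanSpace ℝ (Fin n), ‖θ‖ = 1 → suppFn K θ - suppFn L θ ≤ b) (hx : x ∈ K) :
    infDist x L ≤ b := by
  by_cases hxL : x ∈ L
  · rwa [infDist_zero_of_mem hxL]
  obtain ⟨θ, hθ, hsep⟩ := exists_norm_eq_one_suppFn_add_infDist_le hL hLc hLconv hxL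
  linarith [le_suppFn hKc hx θ, h θ hθ]

lemma hausdorffDist_le_of_abs_suppFn_sub_suppFn_le (hK : K.Nonempty) (hKc : IsCompact K)
    (hKconv : Convex ℝ K) (hL : L.Nonempty) (hLc : IsCompact L) (hLconv : Convex ℝ L)
    {b : ℝ} (hb : 0 ≤ b)
    (h : ∀ θ : EuclideanSpace ℝ (Fin n), ‖θ‖ = 1 → |suppFn K θ - suppFn L θ| ≤ b) :
    hausdorffDist K L ≤ b :=
  hausdorffDist_le_of_infDist hb
    (fun _ => infDist_le_of_suppFn_sub_suppFn_le hKc hL hLc hLconv hb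
      fun θ hθ => (abs_le.1 (h θ hθ)).2)
    (fun _ => infDist_le_of_suppFn_sub_suppFn_le hLc hK hKc hKconv hb
      fun θ hθ => (abs_le.1 (abs_sub_comm (suppFn K θ) _ ▸ h θ hθ)).2)

lemma exists_norm_eq_one_lt_abs_suppFn_sub_suppFn (hK : K.Nonempty) (hKc : IsCompact K)
    (hKconv : Convex ℝ K) (hL : L.Nonempty) (hLc : IsCompact L) (hLconv : Convex ℝ L)
    {t : ℝ} (ht : 0 ≤ t) (htK : t < hausdorffDist K L) :
    ∃ θ : EuclideanSpace ℝ (Fin n), ‖θ‖ = 1 ∧ t < |suppFn K θ - suppFn L θ| := by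
  by_contra! h
  exact htK.not_ge (hausdorffDist_le_of_abs_suppFn_sub_suppFn_le hK hKc hKconv hL hLc hLconv ht h)

end SupportFunction

section HausdorffLimit

variable {α : Type*} [MetricSpace α] {s : ℕ → Set α} {t : Set α}

lemma IsClosed.mem_of_infDist_le_of_tendsto (ht : IsClosed t) (htne : t.Nonempty) {x : α}
    {u : ℕ → ℝ} (hu : Tendsto u atTop (𝓝 0)) (hx : ∀ k, infDist x t ≤ u k) : x ∈ t :=
  (ht.mem_iff_infDist_zero htne).2 (le_antisymm (ge_of_tendsto' hu hx) infDist_nonneg)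

lemma subset_of_tendsto_hausdorffDist (hs : ∀ k, IsCompact (s k)) (hsne : ∀ k, (s k).Nonempty)
    (ht : IsCompact t) (htne : t.Nonempty)
    (hst : Tendsto (fun k => hausdorffDist (s k) t) atTop (𝓝 0)) {Ω : Set α} (hΩ : IsClosed Ω)
    (hsΩ : ∀ k, s k ⊆ Ω) : t ⊆ Ω := fun x hx =>
  hΩ.mem_of_infDist_le_of_tendsto ((hsne 0).mono (hsΩ 0)) hst fun k =>
    calc infDist x Ω ≤ infDist x (s k) := infDist_le_infDist_of_subset (hsΩ k) (hsne k)
      _ ≤ hausdorffDist t (s k) := infDist_le_hausdorffDist_of_isCompact ht htne (hs k) (hsne k) hx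
      _ = hausdorffDist (s k) t := hausdorffDist_comm

lemma le_measure_of_tendsto_hausdorffDist [ProperSpace α] [MeasurableSpace α]
    [OpensMeasurableSpace α] {μ : Measure α} [IsFiniteMeasureOnCompacts μ]
    (hs : ∀ k, IsCompact (s k)) (hsne : ∀ k, (s k).Nonempty) (ht : IsCompact t)
    (htne : t.Nonempty) (hst : Tendsto (fun k => hausdorffDist (s k) t) atTop (𝓝 0))
    {c : ℝ≥0∞} (hsc : ∀ k, c ≤ μ (s k)) : c ≤ μ t := by
  refine ge_of_tendsto ((tendsto_measure_cthickening_of_isCompact ht).comp hst)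
    (Eventually.of_forall fun k => (hsc k).trans (measure_mono fun x hx => ?_))
  obtain ⟨y, hy, hxy⟩ := ht.exists_infDist_eq_dist htne x
  exact mem_cthickening_of_dist_le x y _ t hy
    (hxy ▸ infDist_le_hausdorffDist_of_isCompact (hs k) (hsne k) ht htne hx)

lemma convex_of_tendsto_hausdorffDist {E : Type*} [NormedAddCommGroup E] [NormedSpace ℝ E]
    {s : ℕ → Set E} {t : Set E} (hs : ∀ k, IsCompact (s k)) (hsne : ∀ k, (s k).Nonempty)
    (hsconv : ∀ k, Convex ℝ (s k)) (ht : IsCompact t) (htne : t.Nonempty)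
    (hst : Tendsto (fun k => hausdorffDist (s k) t) atTop (𝓝 0)) : Convex ℝ t := by
  intro x hx y hy a b ha hb hab
  refine ht.isClosed.mem_of_infDist_le_of_tendsto htne (by simpa using hst.const_mul 2) fun k => ?_
  have hnear : ∀ z ∈ t, ∃ z' ∈ s k, dist z z' ≤ hausdorffDist (s k) t := fun z hz => by
    obtain ⟨z', hz', hzz'⟩ := (hs k).exists_infDist_eq_dist (hsne k) z
    exact ⟨z', hz', hzz' ▸ hausdorffDist_comm (s := t) ▸
      infDist_le_hausdorffDist_of_isCompact ht htne (hs k) (hsne k) hz⟩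
  obtain ⟨x', hx', hxx'⟩ := hnear x hx
  obtain ⟨y', hy', hyy'⟩ := hnear y hy
  calc infDist (a • x + b • y) t
      ≤ infDist (a • x' + b • y') t + dist (a • x + b • y) (a • x' + b • y') :=
        infDist_le_infDist_add_dist
    _ ≤ hausdorffDist (s k) t + (a * dist x x' + b * dist y y') := by
        gcongr
        · exact infDist_le_hausdorffDist_of_isCompact (hs k) (hsne k) ht htne
            (hsconv k hx' hy' ha hb hab)
        · refine (dist_add_add_le _ _ _ _).trans_eq ?_
          rw [dist_smul₀, dist_smul₀, Real.norm_of_nonneg ha, Real.norm_of_nonneg hb]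
    _ ≤ hausdorffDist (s k) t + (a * hausdorffDist (s k) t + b * hausdorffDist (s k) t) := by
        gcongr
    _ = 2 * hausdorffDist (s k) t := by rw [← add_mul, hab]; ring

end HausdorffLimit

section ConvexBodyLimit

variable {n : ℕ} {K L : Set (EuclideanSpace ℝ (Fin n))}

lemma homothety_image_subset_of_hausdorffDist_le (hKc : IsCompact K) (hL : L.Nonempty)
    (hLc : IsCompact L) (hLconv : Convex ℝ L) {x₀ : EuclideanSpace ℝ (Fin n)} {ρ d : ℝ}
    (hρ : 0 < ρ) (hball : closedBall x₀ ρ ⊆ K) (hd : hausdorffDist K L ≤ d) (hdρ : d ≤ ρ) :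
    AffineMap.homothety x₀ (1 - d / ρ) '' K ⊆ L := by
  have hK : K.Nonempty := ⟨x₀, hball (mem_closedBall_self hρ.le)⟩
  rintro _ ⟨w, hw, rfl⟩
  by_contra hy
  obtain ⟨θ, hθ, hsep⟩ := exists_norm_eq_one_suppFn_add_infDist_le hL hLc hLconv hy
  have hx₀ : ⟪θ, x₀⟫ + ρ ≤ suppFn K θ := by
    have hmem : x₀ + ρ • θ ∈ K := hball (by simp [norm_smul, hθ, abs_of_pos hρ])
    simpa [inner_add_right, real_inner_smul_right, real_inner_self_eq_norm_sq, hθ]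
      using le_suppFn hKc hmem θ
  have hKL : suppFn K θ - suppFn L θ ≤ d := by
    simpa [hθ] using (suppFn_sub_suppFn_le hK hKc hL hLc θ).trans (by rwa [hθ, one_mul])
  have hd0 : 0 ≤ d := hausdorffDist_nonneg.trans hd
  have h1 : (1 - d / ρ) * ⟪θ, w⟫ ≤ (1 - d / ρ) * suppFn K θ :=
    mul_le_mul_of_nonneg_left (le_suppFn hKc hw θ) (by rw [sub_nonneg, div_le_one hρ]; exact hdρ)
  have h2 : d / ρ * ⟪θ, x₀⟫ ≤ d / ρ * (suppFn K θ - ρ) :=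
    mul_le_mul_of_nonneg_left (by linarith) (by positivity)
  have h3 : d / ρ * ρ = d := div_mul_cancel₀ d hρ.ne'
  have hinner : ⟪θ, AffineMap.homothety x₀ (1 - d / ρ) w⟫
      = (1 - d / ρ) * ⟪θ, w⟫ + d / ρ * ⟪θ, x₀⟫ := by
    simp only [AffineMap.homothety_apply, vsub_eq_sub, vadd_eq_add, inner_add_right,
      real_inner_smul_right, inner_sub_right]
    ring
  have hzero : infDist (AffineMap.homothety x₀ (1 - d / ρ) w) L = 0 :=
    le_antisymm (by nlinarith) infDist_nonneg
  exact hy ((hLc.isClosed.mem_iff_infDist_zero hL).2 hzero)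

lemma measure_le_of_tendsto_hausdorffDist_of_convex (μ : Measure (EuclideanSpace ℝ (Fin n)))
    [μ.IsAddHaarMeasure] {s : ℕ → Set (EuclideanSpace ℝ (Fin n))}
    {t : Set (EuclideanSpace ℝ (Fin n))}
    (hs : ∀ k, IsCompact (s k)) (hsne : ∀ k, (s k).Nonempty) (hsconv : ∀ k, Convex ℝ (s k))
    (ht : IsCompact t) (htconv : Convex ℝ t)
    (hst : Tendsto (fun k => hausdorffDist (s k) t) atTop (𝓝 0))
    {c : ℝ≥0∞} (hsc : ∀ k, μ (s k) ≤ c) : μ t ≤ c := by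
  rcases (interior t).eq_empty_or_nonempty with hint | ⟨x₀, hx₀⟩
  · calc μ t ≤ μ (frontier t) := measure_mono fun x hx => ⟨subset_closure hx, by simp [hint]⟩
      _ = 0 := htconv.addHaar_frontier μ
      _ ≤ c := zero_le
  obtain ⟨ρ, hρ, hball⟩ := nhds_basis_closedBall.mem_iff.1 (mem_interior_iff_mem_nhds.1 hx₀)
  have hts : Tendsto (fun k => hausdorffDist t (s k)) atTop (𝓝 0) := by
    simpa only [hausdorffDist_comm] using hst
  have hlim : Tendsto (fun k => ENNReal.ofReal |(1 - hausdorffDist t (s k) / ρ) ^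
      Module.finrank ℝ (EuclideanSpace ℝ (Fin n))| * μ t) atTop (𝓝 (μ t)) := by
    have hr : Tendsto (fun k => 1 - hausdorffDist t (s k) / ρ) atTop (𝓝 1) := by
      simpa using (tendsto_const_nhds (x := (1 : ℝ))).sub (hts.div_const ρ)
    simpa using ENNReal.Tendsto.mul_const (ENNReal.tendsto_ofReal (hr.pow _).abs)
      (.inl (by simp))
  refine le_of_tendsto hlim ((hts.eventually (eventually_le_nhds hρ)).mono fun k hk => ?_)
  rw [← Measure.addHaar_image_homothety]
  exact (measure_mono (homothety_image_subset_of_hausdorffDist_le ht (hsne k) (hs k) (hsconv k)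
    hρ hball le_rfl hk)).trans (hsc k)

lemma mem_Kc_of_tendsto_hausdorffDist {Ω : Set (EuclideanSpace ℝ (Fin n))} (hΩ : IsClosed Ω)
    {c : ℝ≥0∞} {ω : ℕ → Set (EuclideanSpace ℝ (Fin n))} (hω : ∀ k, ω k ∈ Kc Ω c)
    {ωstar : Set (EuclideanSpace ℝ (Fin n))} (hne : ωstar.Nonempty) (hcomp : IsCompact ωstar)
    (hconv : Tendsto (fun k => hausdorffDist (ω k) ωstar) atTop (𝓝 0)) : ωstar ∈ Kc Ω c := by
  choose hωne hωc hωconv hωΩ hωvol using hω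
  have hstarconv := convex_of_tendsto_hausdorffDist hωc hωne hωconv hcomp hne hconv
  refine ⟨hne, hcomp, hstarconv, subset_of_tendsto_hausdorffDist hωc hωne hcomp hne hconv hΩ hωΩ,
    le_antisymm ?_ ?_⟩
  · exact measure_le_of_tendsto_hausdorffDist_of_convex volume hωc hωne hωconv hcomp hstarconv
      hconv (hωvol · |>.le)
  · exact le_measure_of_tendsto_hausdorffDist hωc hωne hcomp hne hconv (hωvol · |>.ge)

end ConvexBodyLimit

section SphereChart

variable {m : ℕ}

noncomputable def removeCoord (i : Fin (m + 1)) (x : EuclideanSpace ℝ (Fin (m + 1))) :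
    EuclideanSpace ℝ (Fin m) :=
  WithLp.toLp 2 (i.removeNth (WithLp.ofLp x))

/-- On the closed unit ball, the inverse of `removeCoord i` on the hemisphere of `S^m` where
`x i` has sign `σ`. -/
noncomputable def sphereChart (i : Fin (m + 1)) (σ : SignType) (z : EuclideanSpace ℝ (Fin m)) :
    EuclideanSpace ℝ (Fin (m + 1)) :=
  WithLp.toLp 2 (i.insertNth ((σ : ℝ) * √(1 - ‖z‖ ^ 2)) (WithLp.ofLp z))

lemma norm_sq_eq_sq_add_norm_removeCoord_sq (i : Fin (m + 1))
    (x : EuclideanSpace ℝ (Fin (m + 1))) : ‖x‖ ^ 2 = x i ^ 2 + ‖removeCoord i x‖ ^ 2 := by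
  simp only [EuclideanSpace.norm_sq_eq, Real.norm_eq_abs, sq_abs, removeCoord, Fin.removeNth]
  exact Fin.sum_univ_succAbove _ i

lemma lipschitzWith_removeCoord (i : Fin (m + 1)) : LipschitzWith 1 (removeCoord i) := by
  refine LipschitzWith.of_dist_le_mul fun x y => ?_
  rw [NNReal.coe_one, one_mul, dist_eq_norm, dist_eq_norm,
    ← sq_le_sq₀ (norm_nonneg _) (norm_nonneg _), norm_sq_eq_sq_add_norm_removeCoord_sq i (x - y)]
  exact le_add_of_nonneg_left (sq_nonneg _)

lemma removeCoord_sphereChart (i : Fin (m + 1)) (σ : SignType) (z : EuclideanSpace ℝ (Fin m)) :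
    removeCoord i (sphereChart i σ z) = z := by
  simp [removeCoord, sphereChart]

lemma norm_sphereChart {σ : SignType} (hσ : σ ≠ 0) (i : Fin (m + 1))
    {z : EuclideanSpace ℝ (Fin m)} (hz : ‖z‖ ≤ 1) : ‖sphereChart i σ z‖ = 1 := by
  have hσ2 : (σ : ℝ) ^ 2 = 1 := by cases σ <;> simp_all
  have h := norm_sq_eq_sq_add_norm_removeCoord_sq i (sphereChart i σ z)
  rw [removeCoord_sphereChart] at h
  simp only [sphereChart, PiLp.toLp_apply, Fin.insertNth_apply_same, mul_pow, hσ2, one_mul,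
    Real.sq_sqrt (by nlinarith [norm_nonneg z] : (0 : ℝ) ≤ 1 - ‖z‖ ^ 2), sub_add_cancel] at h
  exact (pow_eq_one_iff_of_nonneg (norm_nonneg _) two_ne_zero).1 h

lemma sphereChart_removeCoord {x : EuclideanSpace ℝ (Fin (m + 1))} (hx : ‖x‖ = 1)
    (i : Fin (m + 1)) : sphereChart i (SignType.sign (x i)) (removeCoord i x) = x := by
  have h : 1 - ‖removeCoord i x‖ ^ 2 = x i ^ 2 := by
    linarith [norm_sq_eq_sq_add_norm_removeCoord_sq i x, congrArg (· ^ 2) hx]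
  rw [sphereChart, h, Real.sqrt_sq_eq_abs, sign_mul_abs, removeCoord, WithLp.ofLp_toLp,
    Fin.insertNth_self_removeNth, WithLp.toLp_ofLp]

lemma exists_norm_removeCoord_sq_le {x : EuclideanSpace ℝ (Fin (m + 1))} (hx : ‖x‖ = 1) :
    ∃ i, ‖removeCoord i x‖ ^ 2 ≤ m / (m + 1) := by
  have hsum : ∑ _i : Fin (m + 1), (1 / (m + 1) : ℝ) ≤ ∑ i, x i ^ 2 := by
    have := EuclideanSpace.norm_sq_eq x
    simp only [hx, Real.norm_eq_abs, sq_abs] at this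
    simp only [← this, Finset.sum_const, Finset.card_univ, Fintype.card_fin, nsmul_eq_mul]
    push_cast
    rw [mul_one_div_cancel (by positivity), one_pow]
  obtain ⟨i, -, hi⟩ := Finset.exists_le_of_sum_le Finset.univ_nonempty hsum
  refine ⟨i, ?_⟩
  have h := norm_sq_eq_sq_add_norm_removeCoord_sq i x
  rw [hx] at h
  have : (m : ℝ) / (m + 1) = 1 - 1 / (m + 1) := by field_simp; ring
  linarith

lemma contDiffOn_sphereChart (i : Fin (m + 1)) (σ : SignType) :
    ContDiffOn ℝ 1 (sphereChart i σ) (ball 0 1) := by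
  refine (contDiffOn_piLp 2).2 fun k => ?_
  induction k using Fin.succAboveCases i with
  | x =>
    simp only [sphereChart, PiLp.toLp_apply, Fin.insertNth_apply_same]
    refine contDiffOn_const.mul ((contDiffOn_const.sub (contDiff_norm_sq ℝ).contDiffOn).sqrt
      fun z hz => ?_)
    have : ‖z‖ < 1 := mem_ball_zero_iff.1 hz
    nlinarith [norm_nonneg z]
  | p j =>
    simp only [sphereChart, PiLp.toLp_apply, Fin.insertNth_apply_succAbove]
    exact (contDiff_piLp_apply 2).contDiffOn

end SphereChart

section SphereMeasure

lemma hausdorffMeasure_sphere_succ_lt_top (m : ℕ) :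
    μH[m] (sphere (0 : EuclideanSpace ℝ (Fin (m + 1))) 1) < ⊤ := by
  set r : ℝ := √(m / (m + 1))
  have hr : r < 1 := (Real.sqrt_lt' one_pos).2 <| by
    rw [one_pow, div_lt_one (by positivity)]
    exact lt_add_one _
  have hcover : sphere (0 : EuclideanSpace ℝ (Fin (m + 1))) 1 ⊆
      ⋃ (i) (σ : SignType), sphereChart i σ '' closedBall 0 r := by
    intro x hx
    rw [mem_sphere_zero_iff_norm] at hx
    obtain ⟨i, hi⟩ := exists_norm_removeCoord_sq_le hx
    exact mem_iUnion₂.2 ⟨i, SignType.sign (x i), removeCoord i x,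
      mem_closedBall_zero_iff.2 (Real.le_sqrt_of_sq_le hi), sphereChart_removeCoord hx i⟩
  have hchart : ∀ (i : Fin (m + 1)) (σ : SignType),
      μH[m] (sphereChart i σ '' closedBall 0 r) < ⊤ := fun i σ => by
    obtain ⟨C, hC⟩ := ((contDiffOn_sphereChart i σ).mono (closedBall_subset_ball hr))
      |>.exists_lipschitzOnWith one_ne_zero (convex_closedBall 0 r) (isCompact_closedBall 0 r)
    exact (hC.hausdorffMeasure_image_le (Nat.cast_nonneg m)).trans_lt (ENNReal.mul_lt_top
      (ENNReal.rpow_lt_top_of_nonneg (Nat.cast_nonneg m) ENNReal.coe_ne_top)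
      measure_closedBall_lt_top)
  calc μH[m] (sphere (0 : EuclideanSpace ℝ (Fin (m + 1))) 1)
      ≤ ∑ i, ∑ σ : SignType, μH[m] (sphereChart i σ '' closedBall 0 r) :=
        (measure_mono hcover).trans ((measure_iUnion_fintype_le _ _).trans
          (Finset.sum_le_sum fun i _ => measure_iUnion_fintype_le _ _))
    _ < ⊤ := ENNReal.sum_lt_top.2 fun i _ => ENNReal.sum_lt_top.2 fun σ _ => hchart i σ

lemma hausdorffMeasure_sphere_succ_inter_pos {m : ℕ}
    {V : Set (EuclideanSpace ℝ (Fin (m + 1)))} (hV : IsOpen V) (hne : (sphere 0 1 ∩ V).Nonempty) :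
    0 < μH[m] (sphere 0 1 ∩ V) := by
  obtain ⟨x, hx, hxV⟩ := hne
  rw [mem_sphere_zero_iff_norm] at hx
  obtain ⟨i, hi⟩ := exists_norm_removeCoord_sq_le hx
  have hnorm := norm_sq_eq_sq_add_norm_removeCoord_sq i x
  have hm : (m : ℝ) / (m + 1) < 1 := (div_lt_one (by positivity)).2 (lt_add_one _)
  have hlt : ‖removeCoord i x‖ < 1 := by nlinarith [norm_nonneg (removeCoord i x)]
  have hσ : SignType.sign (x i) ≠ 0 := sign_ne_zero.2 fun h0 => by
    rw [hx, h0] at hnorm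
    nlinarith
  set W := ball 0 1 ∩ sphereChart i (SignType.sign (x i)) ⁻¹' V
  have hW : IsOpen W :=
    (contDiffOn_sphereChart i _).continuousOn.isOpen_inter_preimage isOpen_ball hV
  have hxW : removeCoord i x ∈ W :=
    ⟨mem_ball_zero_iff.2 hlt, by rwa [mem_preimage, sphereChart_removeCoord hx]⟩
  have hWsub : W ⊆ removeCoord i '' (sphere 0 1 ∩ V) := fun z hz =>
    ⟨_, ⟨mem_sphere_zero_iff_norm.2 (norm_sphereChart hσ i (mem_ball_zero_iff.1 hz.1).le), hz.2⟩,
      removeCoord_sphereChart i _ z⟩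
  calc 0 < μH[m] W := hW.measure_pos _ ⟨_, hxW⟩
    _ ≤ μH[m] (removeCoord i '' (sphere 0 1 ∩ V)) := measure_mono hWsub
    _ ≤ μH[m] (sphere 0 1 ∩ V) := by
      simpa using (lipschitzWith_removeCoord i).hausdorffMeasure_image_le (Nat.cast_nonneg m)
        (sphere 0 1 ∩ V)

lemma hausdorffMeasure_sphere_lt_top_s4 (n : ℕ) :
    μH[(n : ℝ) - 1] (sphere (0 : EuclideanSpace ℝ (Fin n)) 1) < ⊤ := by
  cases n with
  | zero => simp [sphere_eq_empty_of_subsingleton one_ne_zero]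
  | succ m => simpa using hausdorffMeasure_sphere_succ_lt_top m

lemma hausdorffMeasure_sphere_inter_pos {n : ℕ} {V : Set (EuclideanSpace ℝ (Fin n))}
    (hV : IsOpen V) (hne : (sphere 0 1 ∩ V).Nonempty) : 0 < μH[(n : ℝ) - 1] (sphere 0 1 ∩ V) := by
  cases n with
  | zero => simp [sphere_eq_empty_of_subsingleton one_ne_zero] at hne
  | succ m => simpa using hausdorffMeasure_sphere_succ_inter_pos hV hne

end SphereMeasure

section RpowIntegral

variable {α : Type*} [MeasurableSpace α] {μ : Measure α} {s : Set α} {f : α → ℝ} {p b : ℝ}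

lemma rpow_mul_rpow_one_div {t : ℝ} (hb : 0 ≤ b) (ht : 0 ≤ t) (hp : p ≠ 0) :
    (b ^ p * t) ^ (1 / p) = b * t ^ (1 / p) := by
  rw [Real.mul_rpow (Real.rpow_nonneg hb p) ht, ← Real.rpow_mul hb, mul_one_div_cancel hp,
    Real.rpow_one]

lemma setIntegral_abs_rpow_rpow_one_div_le (hp : 0 < p) (hb : 0 ≤ b) (hs : μ s < ⊤)
    (hf : ∀ x ∈ s, |f x| ≤ b) : (∫ x in s, |f x| ^ p ∂μ) ^ (1 / p) ≤ b * μ.real s ^ (1 / p) := by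
  rw [← rpow_mul_rpow_one_div hb measureReal_nonneg hp.ne']
  refine Real.rpow_le_rpow (integral_nonneg fun x => by positivity) ?_ (by positivity)
  refine (Real.le_norm_self _).trans (norm_setIntegral_le_of_norm_le_const hs fun x hx => ?_)
  rw [Real.norm_of_nonneg (by positivity)]
  exact Real.rpow_le_rpow (abs_nonneg _) (hf x hx) hp.le

lemma mul_measureReal_rpow_one_div_le_setIntegral (hp : 0 < p) (hb : 0 ≤ b)
    (hint : IntegrableOn (fun x => |f x| ^ p) s μ) {u : Set α} (hu : MeasurableSet u)
    (hus : u ⊆ s) (hμu : μ u ≠ ⊤) (hf : ∀ x ∈ u, b ≤ |f x|) :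
    b * μ.real u ^ (1 / p) ≤ (∫ x in s, |f x| ^ p ∂μ) ^ (1 / p) := by
  rw [← rpow_mul_rpow_one_div hb measureReal_nonneg hp.ne']
  refine Real.rpow_le_rpow (by positivity) ?_ (by positivity)
  calc b ^ p * μ.real u ≤ ∫ x in u, |f x| ^ p ∂μ := setIntegral_ge_of_const_le_real hu hμu
        (fun x hx => Real.rpow_le_rpow hb (hf x hx) hp.le) (hint.mono_set hus)
    _ ≤ ∫ x in s, |f x| ^ p ∂μ :=
        setIntegral_mono_set hint (Eventually.of_forall fun x => by positivity) hus.eventuallyLE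

lemma tendsto_mul_rpow_one_div {ι : Type*} {l : Filter ι} {q : ι → ℝ} (hq : Tendsto q l atTop)
    {a : ℝ} (ha : 0 < a) (b : ℝ) : Tendsto (fun k => b * a ^ (1 / q k)) l (𝓝 b) := by
  have h0 : Tendsto (fun k => 1 / q k) l (𝓝 0) :=
    hq.inv_tendsto_atTop.congr fun k => (one_div (q k)).symm
  simpa using ((Real.continuousAt_const_rpow ha.ne').tendsto.comp h0).const_mul b

end RpowIntegral

section Jp

variable {n : ℕ} {K L : Set (EuclideanSpace ℝ (Fin n))}

lemma continuous_abs_suppFn_sub (hK : K.Nonempty) (hKc : IsCompact K) (hL : L.Nonempty)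
    (hLc : IsCompact L) : Continuous fun θ => |suppFn K θ - suppFn L θ| :=
  ((continuous_suppFn_s4 hK hKc).sub (continuous_suppFn_s4 hL hLc)).abs

lemma Jp_le_hausdorffDist_mul (hK : K.Nonempty) (hKc : IsCompact K) (hL : L.Nonempty)
    (hLc : IsCompact L) {p : ℝ} (hp : 0 < p) :
    Jp K L p ≤ hausdorffDist K L *
      (μH[(n : ℝ) - 1] : Measure (EuclideanSpace ℝ (Fin n))).real (sphere 0 1) ^ (1 / p) :=
  setIntegral_abs_rpow_rpow_one_div_le hp hausdorffDist_nonneg (hausdorffMeasure_sphere_lt_top_s4 n)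
    fun θ hθ => by
      simpa [mem_sphere_zero_iff_norm.1 hθ] using abs_suppFn_sub_suppFn_le_s4 hK hKc hL hLc θ

lemma integrableOn_sphere_abs_suppFn_sub_rpow (hK : K.Nonempty) (hKc : IsCompact K)
    (hL : L.Nonempty) (hLc : IsCompact L) {p : ℝ} (hp : 0 < p) :
    IntegrableOn (fun θ => |suppFn K θ - suppFn L θ| ^ p) (sphere 0 1) μH[(n : ℝ) - 1] :=
  ((continuous_abs_suppFn_sub hK hKc hL hLc).rpow_const fun _ => .inr hp.le).continuousOn
    |>.integrableOn_of_subset_isCompact (isCompact_sphere 0 1) isClosed_sphere.measurableSet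
      subset_rfl (hausdorffMeasure_sphere_lt_top_s4 n).ne

lemma mul_measureReal_rpow_one_div_le_Jp {L' : Set (EuclideanSpace ℝ (Fin n))}
    (hK : K.Nonempty) (hKc : IsCompact K) (hL : L.Nonempty) (hLc : IsCompact L)
    (hL' : L'.Nonempty) (hL'c : IsCompact L') {p b t : ℝ} (hp : 0 < p) (hb : 0 ≤ b)
    (hbt : b + hausdorffDist L' L ≤ t) :
    b * (μH[(n : ℝ) - 1] : Measure (EuclideanSpace ℝ (Fin n))).real
      (sphere 0 1 ∩ {θ | t < |suppFn K θ - suppFn L θ|}) ^ (1 / p) ≤ Jp K L' p := by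
  refine mul_measureReal_rpow_one_div_le_setIntegral hp hb
    (integrableOn_sphere_abs_suppFn_sub_rpow hK hKc hL' hL'c hp)
    (isClosed_sphere.measurableSet.inter
      (isOpen_lt continuous_const (continuous_abs_suppFn_sub hK hKc hL hLc)).measurableSet)
    inter_subset_left
    (measure_ne_top_of_subset inter_subset_left (hausdorffMeasure_sphere_lt_top_s4 n).ne)
    fun θ ⟨hθ, hθt⟩ => ?_
  have hL'L := abs_suppFn_sub_suppFn_le_s4 hL' hL'c hL hLc θ
  rw [mem_sphere_zero_iff_norm.1 hθ, one_mul] at hL'L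
  linarith [abs_sub_le (suppFn K θ) (suppFn L' θ) (suppFn L θ), hθt.out]

lemma measureReal_sphere_inter_lt_abs_suppFn_sub_pos (hK : K.Nonempty) (hKc : IsCompact K)
    (hKconv : Convex ℝ K) (hL : L.Nonempty) (hLc : IsCompact L) (hLconv : Convex ℝ L) {t : ℝ}
    (ht : 0 ≤ t) (htK : t < hausdorffDist K L) :
    0 < (μH[(n : ℝ) - 1] : Measure (EuclideanSpace ℝ (Fin n))).real
      (sphere 0 1 ∩ {θ | t < |suppFn K θ - suppFn L θ|}) := by
  obtain ⟨θ, hθ, hθt⟩ :=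
    exists_norm_eq_one_lt_abs_suppFn_sub_suppFn hK hKc hKconv hL hLc hLconv ht htK
  exact ENNReal.toReal_pos (hausdorffMeasure_sphere_inter_pos
    (isOpen_lt continuous_const (continuous_abs_suppFn_sub hK hKc hL hLc))
    ⟨θ, mem_sphere_zero_iff_norm.2 hθ, hθt⟩).ne'
    (measure_ne_top_of_subset inter_subset_left (hausdorffMeasure_sphere_lt_top_s4 n).ne)

end Jp

theorem limit_of_minimizers_solves_hausdorff_problem_general {n : ℕ}
    (Ω : Set (EuclideanSpace ℝ (Fin n)))
    (hΩcomp : IsCompact Ω) (hΩconv : Convex ℝ Ω)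
    (c : ℝ≥0∞)
    (p : ℕ → ℝ) (hptop : Tendsto p atTop atTop)
    (ω : ℕ → Set (EuclideanSpace ℝ (Fin n)))
    (hωmem : ∀ k, ω k ∈ Kc Ω c)
    (hωmin : ∀ k, ∀ ω' ∈ Kc Ω c, Jp Ω (ω k) (p k) ≤ Jp Ω ω' (p k))
    (ωstar : Set (EuclideanSpace ℝ (Fin n)))
    (hstarne : ωstar.Nonempty) (hstarcomp : IsCompact ωstar)
    (hconv : Tendsto (fun k => hausdorffDist (ω k) ωstar) atTop (𝓝 0)) :
    ωstar ∈ Kc Ω c ∧ ∀ ω' ∈ Kc Ω c, hausdorffDist ωstar Ω ≤ hausdorffDist ω' Ω := by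
  have hstar := mem_Kc_of_tendsto_hausdorffDist hΩcomp.isClosed hωmem hstarne hstarcomp hconv
  have hΩne : Ω.Nonempty := (hωmem 0).1.mono (hωmem 0).2.2.2.1
  refine ⟨hstar, fun ω' hω' => le_of_forall_pos_le_add fun δ hδ => ?_⟩
  set M := hausdorffDist ωstar Ω
  rcases le_or_gt M δ with hMδ | hδM
  · linarith [hausdorffDist_nonneg (s := ω') (t := Ω)]
  set μ : Measure (EuclideanSpace ℝ (Fin n)) := μH[(n : ℝ) - 1]
  set U := sphere 0 1 ∩ {θ | M - δ / 2 < |suppFn Ω θ - suppFn ωstar θ|}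
  have hU : 0 < μ.real U := measureReal_sphere_inter_lt_abs_suppFn_sub_pos hΩne hΩcomp hΩconv
    hstarne hstarcomp hstar.2.2.1 (by linarith) (by rw [hausdorffDist_comm]; linarith)
  have hS : 0 < μ.real (sphere 0 1) :=
    hU.trans_le (measureReal_mono inter_subset_left (hausdorffMeasure_sphere_lt_top_s4 n).ne)
  have hbound : ∀ᶠ k in atTop, (M - δ) * μ.real U ^ (1 / p k) ≤
      hausdorffDist ω' Ω * μ.real (sphere 0 1) ^ (1 / p k) := by
    filter_upwards [hconv.eventually (gt_mem_nhds (half_pos hδ)), hptop.eventually_gt_atTop 0]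
      with k hk hpk
    calc (M - δ) * μ.real U ^ (1 / p k) ≤ Jp Ω (ω k) (p k) :=
          mul_measureReal_rpow_one_div_le_Jp hΩne hΩcomp hstarne hstarcomp (hωmem k).1
            (hωmem k).2.1 hpk (by linarith) (by linarith)
      _ ≤ Jp Ω ω' (p k) := hωmin k ω' hω'
      _ ≤ _ := hausdorffDist_comm (s := ω') ▸
          Jp_le_hausdorffDist_mul hΩne hΩcomp hω'.1 hω'.2.1 hpk
  linarith [le_of_tendsto_of_tendsto (tendsto_mul_rpow_one_div hptop hU _)
    (tendsto_mul_rpow_one_div hptop hS _) hbound]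

/-- Any Hausdorff-distance accumulation point of minimizers of `J_{p_k}` (with `p_k → ∞`)
over the class `K_c` belongs to `K_c` and minimizes the Hausdorff distance to `Ω` over `K_c`.
(The limit `ω*` is taken, as usual for Hausdorff convergence, in the space of nonempty
compact subsets of `ℝⁿ`.) -/
theorem limit_of_minimizers_solves_hausdorff_problem {n : ℕ}
    (Ω : Set (EuclideanSpace ℝ (Fin n)))
    (hΩcomp : IsCompact Ω) (hΩconv : Convex ℝ Ω) (hΩint : (interior Ω).Nonempty)
    (c : ℝ≥0∞) (hc : c ≤ volume Ω)
    (p : ℕ → ℝ) (hp : ∀ k, 1 ≤ p k) (hptop : Tendsto p atTop atTop)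
    (ω : ℕ → Set (EuclideanSpace ℝ (Fin n)))
    (hωmem : ∀ k, ω k ∈ Kc Ω c)
    (hωmin : ∀ k, ∀ ω' ∈ Kc Ω c, Jp Ω (ω k) (p k) ≤ Jp Ω ω' (p k))
    (ωstar : Set (EuclideanSpace ℝ (Fin n)))
    (hstarne : ωstar.Nonempty) (hstarcomp : IsCompact ωstar)
    (hconv : Tendsto (fun k => hausdorffDist (ω k) ωstar) atTop (𝓝 0)) :
    ωstar ∈ Kc Ω c ∧ ∀ ω' ∈ Kc Ω c, hausdorffDist ωstar Ω ≤ hausdorffDist ω' Ω :=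
  limit_of_minimizers_solves_hausdorff_problem_general Ω hΩcomp hΩconv c p hptop ω hωmem hωmin ωstar
    hstarne hstarcomp hconv
end

section
/- Let (X, δ) be a metric space and F, J : X → ℝ, and set I := F(X). Assume hypotheses (A)–(D): (A) X is nonempty and compact; (B) F and J are continuous on X and neither is constant; (C) for every Ω ∈ X there exist ε_Ω > 0 and a continuous map Ψ_Ω : [inf I, sup I] ∩ (F(Ω)−ε_Ω, F(Ω)+ε_Ω) → X with Ψ_Ω(F(Ω)) = Ω and F(Ψ_Ω(x)) = x for all x in this set; (D) for every Ω ∈ X with F(Ω) < sup I and every r > 0 there exists Ω' ∈ X with δ(Ω,Ω') < r and J(Ω') < J(Ω). Then the function f : I → ℝ defined by f(x) := min{ J(Ω) : Ω ∈ X, F(Ω) = x } is continuous and strictly decreasing on I. -/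
open Set

/-- Existence of a minimizer of `J` on each fiber of `F`. -/
lemma vfc_exists_min {X : Type*} [MetricSpace X] [CompactSpace X] (F J : X → ℝ)
    (hF : Continuous F) (hJ : Continuous J) {x : ℝ} (hx : x ∈ range F) :
    ∃ Ω : X, F Ω = x ∧ IsLeast (J '' {Ω' : X | F Ω' = x}) (J Ω) := by
  have hclosed : IsClosed {Ω' : X | F Ω' = x} := isClosed_eq hF continuous_const
  have hcpt : IsCompact {Ω' : X | F Ω' = x} := hclosed.isCompact
  obtain ⟨Ω₁, hΩ₁⟩ := hx
  obtain ⟨Ω₀, hΩ₀mem, hmin⟩ := hcpt.exists_isMinOn ⟨Ω₁, hΩ₁⟩ hJ.continuousOn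
  exact ⟨Ω₀, hΩ₀mem, mem_image_of_mem _ hΩ₀mem, by
    rintro _ ⟨Ω', hΩ', rfl⟩; exact hmin hΩ'⟩

/-- No minimizer of `J` on `{F ≤ y}` can have `F Ω₀ < y` (when `y` is in the range). -/
lemma vfc_min_on_sublevel {X : Type*} [MetricSpace X] (F J : X → ℝ)
    (hF : Continuous F)
    (hD : ∀ Ω : X, F Ω < sSup (range F) → ∀ r > (0 : ℝ), ∃ Ω' : X,
      dist Ω Ω' < r ∧ J Ω' < J Ω)
    {y : ℝ} (hy : y ∈ range F) (hbdd : BddAbove (range F))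
    {Ω₀ : X} (hmin : ∀ Ω' : X, F Ω' ≤ y → J Ω₀ ≤ J Ω') (hlt : F Ω₀ < y) : False := by
  have hsup : F Ω₀ < sSup (range F) := lt_of_lt_of_le hlt (le_csSup hbdd hy)
  obtain ⟨r, hr, hball⟩ := Metric.continuous_iff.1 hF Ω₀ (y - F Ω₀) (by linarith)
  obtain ⟨Ω', hd, hJ'⟩ := hD Ω₀ hsup r hr
  have := hball Ω' (by rwa [dist_comm])
  have hFΩ' : F Ω' ≤ y := by
    have := abs_lt.1 (by simpa [Real.dist_eq] using this)
    linarith [this.2]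
  exact absurd (hmin Ω' hFΩ') (not_le.2 hJ')

/-- Under hypotheses (A)–(D), the value function
`f(x) = min { J(Ω) : Ω ∈ X, F(Ω) = x }` is continuous and strictly decreasing on the
range `I` of `F`. -/
theorem value_function_continuous_strictAnti {X : Type*} [MetricSpace X] (F J : X → ℝ)
    (hA : Nonempty X ∧ CompactSpace X)
    (hB : Continuous F ∧ Continuous J ∧ (∃ a b : X, F a ≠ F b) ∧ (∃ a b : X, J a ≠ J b))
    (hC : ∀ Ω : X, ∃ ε > (0 : ℝ), ∃ Ψ : ℝ → X,
      ContinuousOn Ψ (Icc (sInf (range F)) (sSup (range F)) ∩ Ioo (F Ω - ε) (F Ω + ε)) ∧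
      Ψ (F Ω) = Ω ∧
      ∀ x ∈ Icc (sInf (range F)) (sSup (range F)) ∩ Ioo (F Ω - ε) (F Ω + ε),
        F (Ψ x) = x)
    (hD : ∀ Ω : X, F Ω < sSup (range F) → ∀ r > (0 : ℝ), ∃ Ω' : X,
      dist Ω Ω' < r ∧ J Ω' < J Ω) :
    ContinuousOn (fun x => sInf (J '' {Ω : X | F Ω = x})) (range F) ∧
    StrictAntiOn (fun x => sInf (J '' {Ω : X | F Ω = x})) (range F) := by
  obtain ⟨hne, hcpt⟩ := hA
  obtain ⟨hF, hJ, -, -⟩ := hB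
  set f : ℝ → ℝ := fun x => sInf (J '' {Ω : X | F Ω = x}) with hf
  have hbddA : BddAbove (range F) := (isCompact_range hF).bddAbove
  have hbddB : BddBelow (range F) := (isCompact_range hF).bddBelow
  have hJbdd : ∀ x : ℝ, BddBelow (J '' {Ω : X | F Ω = x}) := fun x =>
    ((isCompact_range hJ).bddBelow).mono (image_subset_range _ _ |>.trans (by simp))
  -- value of f at a minimizer
  have hfval : ∀ x ∈ range F, ∃ Ω : X, F Ω = x ∧ f x = J Ω ∧
      ∀ Ω' : X, F Ω' = x → J Ω ≤ J Ω' := by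
    intro x hx
    obtain ⟨Ω, hΩ, hleast⟩ := vfc_exists_min F J hF hJ hx
    exact ⟨Ω, hΩ, hleast.csInf_eq, fun Ω' hΩ' => hleast.2 (mem_image_of_mem _ hΩ')⟩
  constructor
  · -- continuity
    intro x₀ hx₀
    obtain ⟨Ω₀, hFΩ₀, hfx₀, hmin₀⟩ := hfval x₀ hx₀
    rw [ContinuousWithinAt]
    rw [tendsto_order]
    constructor
    · -- lower semicontinuity
      intro a ha
      have hC' : IsClosed (F '' {Ω : X | J Ω ≤ a}) :=
        (((isClosed_Iic.preimage hJ).isCompact).image hF).isClosed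
      have hx₀C : x₀ ∉ F '' {Ω : X | J Ω ≤ a} := by
        rintro ⟨Ω, hΩa, rfl⟩
        exact absurd (csInf_le (hJbdd _) (mem_image_of_mem _ rfl) : f (F Ω) ≤ J Ω)
          (not_le.2 (lt_of_le_of_lt hΩa ha))
      have hopen : (F '' {Ω : X | J Ω ≤ a})ᶜ ∈ nhds x₀ := hC'.isOpen_compl.mem_nhds hx₀C
      filter_upwards [mem_nhdsWithin_of_mem_nhds hopen, self_mem_nhdsWithin] with x hxc hxr
      by_contra h
      push_neg at h
      obtain ⟨Ω, hΩ, hfx, -⟩ := hfval x hxr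
      exact hxc ⟨Ω, by rw [mem_setOf_eq, ← hfx]; exact h, hΩ⟩
    · -- upper semicontinuity via the local section Ψ
      intro a ha
      obtain ⟨ε, hε, Ψ, hΨc, hΨ0, hΨF⟩ := hC Ω₀
      set S := Icc (sInf (range F)) (sSup (range F)) ∩ Ioo (F Ω₀ - ε) (F Ω₀ + ε) with hS
      have hrange_sub : range F ⊆ Icc (sInf (range F)) (sSup (range F)) :=
        fun z hz => ⟨csInf_le hbddB hz, le_csSup hbddA hz⟩
      have hx₀S : x₀ ∈ S := by
        refine ⟨hrange_sub hx₀, ?_⟩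
        rw [hFΩ₀]; exact ⟨by linarith, by linarith⟩
      have hcont : ContinuousWithinAt (J ∘ Ψ) S x₀ :=
        (hJ.comp_continuousOn hΨc).continuousWithinAt hx₀S
      have hval : J (Ψ x₀) = f x₀ := by rw [← hFΩ₀, hΨ0, hFΩ₀, hfx₀]
      have h1 : ∀ᶠ x in nhdsWithin x₀ S, J (Ψ x) < a := by
        have : Iio a ∈ nhds (J (Ψ x₀)) := Iio_mem_nhds (by rw [hval]; exact ha)
        exact hcont this
      have hIoo : Ioo (F Ω₀ - ε) (F Ω₀ + ε) ∈ nhds x₀ :=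
        Ioo_mem_nhds (by rw [hFΩ₀] at *; linarith) (by rw [hFΩ₀] at *; linarith)
      have heq : nhdsWithin x₀ (range F ∩ Ioo (F Ω₀ - ε) (F Ω₀ + ε)) = nhdsWithin x₀ (range F) :=
        nhdsWithin_inter_of_mem' (mem_nhdsWithin_of_mem_nhds hIoo)
      have hle : nhdsWithin x₀ (range F) ≤ nhdsWithin x₀ S := by
        rw [← heq]
        exact nhdsWithin_mono _ (fun z hz => ⟨hrange_sub hz.1, hz.2⟩)
      have h2 : ∀ᶠ x in nhdsWithin x₀ (range F), x ∈ S := by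
        filter_upwards [self_mem_nhdsWithin,
          mem_nhdsWithin_of_mem_nhds hIoo] with x hx1 hx2
        exact ⟨hrange_sub hx1, hx2⟩
      filter_upwards [h1.filter_mono hle, h2] with x hx1 hx2
      exact lt_of_le_of_lt (csInf_le (hJbdd x) ⟨Ψ x, hΨF x hx2, rfl⟩) hx1
  · -- strict antitonicity
    intro x hx y hy hxy
    have hK : IsCompact {Ω : X | F Ω ≤ y} := (isClosed_Iic.preimage hF).isCompact
    obtain ⟨Ωy, hΩy⟩ := hy
    obtain ⟨Ω₁, hΩ₁mem, hmin₁⟩ := hK.exists_isMinOn ⟨Ωy, le_of_eq hΩy⟩ hJ.continuousOn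
    have hmin₁' : ∀ Ω' : X, F Ω' ≤ y → J Ω₁ ≤ J Ω' := fun Ω' h => hmin₁ h
    have hFΩ₁ : F Ω₁ = y := by
      by_contra h
      exact vfc_min_on_sublevel F J hF hD ⟨Ωy, hΩy⟩ hbddA hmin₁'
        (lt_of_le_of_ne hΩ₁mem h)
    have hfy : f y = J Ω₁ := by
      refine IsLeast.csInf_eq ⟨mem_image_of_mem _ hFΩ₁, ?_⟩
      rintro _ ⟨Ω', hΩ', rfl⟩
      exact hmin₁' Ω' (le_of_eq hΩ')
    obtain ⟨Ωx, hFΩx, hfx, hminx⟩ := hfval x hx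
    have hle : J Ω₁ ≤ J Ωx := hmin₁' Ωx (by rw [hFΩx]; exact le_of_lt hxy)
    rw [hfy, hfx]
    rcases lt_or_eq_of_le hle with h | h
    · exact h
    · exfalso
      have hminx' : ∀ Ω' : X, F Ω' ≤ y → J Ωx ≤ J Ω' := by
        intro Ω' h'; rw [← h]; exact hmin₁' Ω' h'
      exact vfc_min_on_sublevel F J hF hD ⟨Ωy, hΩy⟩ hbddA hminx'
        (by rw [hFΩx]; exact hxy)
end

section
/- Let (X, δ) be a metric space and F, J : X → ℝ with I := F(X), satisfying hypotheses (A)–(D): (A) X is nonempty and compact; (B) F and J are continuous on X and neither is constant; (C) for every Ω ∈ X there exist ε_Ω > 0 and a continuous map Ψ_Ω : [inf I, sup I] ∩ (F(Ω)−ε_Ω, F(Ω)+ε_Ω) → X with Ψ_Ω(F(Ω)) = Ω and F(Ψ_Ω(x)) = x for all x in this set; (D) for every Ω ∈ X with F(Ω) < sup I and every r > 0 there exists Ω' ∈ X with δ(Ω,Ω') < r and J(Ω') < J(Ω). Then for every x ∈ I, a point Ω* ∈ X solves min{ J(Ω) : Ω ∈ X, F(Ω) = x } if and only if it solves min{ J(Ω)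 : Ω ∈ X, F(Ω) ≤ x }; moreover every solution Ω* of the second problem satisfies F(Ω*) = x. -/
open Set

/-- Under hypotheses (A)–(D), for every `x` in the range of `F`, a point solves
`min { J(Ω) : F(Ω) = x }` iff it solves `min { J(Ω) : F(Ω) ≤ x }`, and every solution of
the latter satisfies `F(Ω*) = x`. -/
theorem equivalence_eq_le_constraint {X : Type*} [MetricSpace X] (F J : X → ℝ)
    (hA : Nonempty X ∧ CompactSpace X)
    (hB : Continuous F ∧ Continuous J ∧ (∃ a b : X, F a ≠ F b) ∧ (∃ a b : X, J a ≠ J b))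
    (hC : ∀ Ω : X, ∃ ε > (0 : ℝ), ∃ Ψ : ℝ → X,
      ContinuousOn Ψ (Icc (sInf (range F)) (sSup (range F)) ∩ Ioo (F Ω - ε) (F Ω + ε)) ∧
      Ψ (F Ω) = Ω ∧
      ∀ x ∈ Icc (sInf (range F)) (sSup (range F)) ∩ Ioo (F Ω - ε) (F Ω + ε),
        F (Ψ x) = x)
    (hD : ∀ Ω : X, F Ω < sSup (range F) → ∀ r > (0 : ℝ), ∃ Ω' : X,
      dist Ω Ω' < r ∧ J Ω' < J Ω) :
    ∀ x ∈ range F, ∀ Ωstar : X,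
      ((F Ωstar = x ∧ ∀ Ω : X, F Ω = x → J Ωstar ≤ J Ω) ↔
        (F Ωstar ≤ x ∧ ∀ Ω : X, F Ω ≤ x → J Ωstar ≤ J Ω)) ∧
      ((F Ωstar ≤ x ∧ ∀ Ω : X, F Ω ≤ x → J Ωstar ≤ J Ω) → F Ωstar = x) := by
  have hcs := hA.2
  intro x hx Ωstar
  have hxle : x ≤ sSup (range F) :=
    le_csSup (isCompact_range hB.1).bddAbove hx
  have key : ∀ Ω : X, F Ω ≤ x → (∀ Ω' : X, F Ω' ≤ x → J Ω ≤ J Ω') → F Ω = x := by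
    intro Ω hle hmin
    by_contra hne
    have hlt : F Ω < x := lt_of_le_of_ne hle hne
    have hsup : F Ω < sSup (range F) := lt_of_lt_of_le hlt hxle
    have hopen : IsOpen {y : X | F y < x} := isOpen_lt hB.1 continuous_const
    obtain ⟨r, hr, hball⟩ := Metric.isOpen_iff.1 hopen Ω hlt
    obtain ⟨Ω', hd, hJ⟩ := hD Ω hsup r hr
    have hmem : Ω' ∈ {y : X | F y < x} := hball (by rwa [Metric.mem_ball, dist_comm])
    exact absurd (hmin Ω' (le_of_lt hmem)) (not_le.2 hJ)
  have hKc : IsCompact {Ω : X | F Ω ≤ x} :=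
    (isClosed_le hB.1 continuous_const).isCompact
  obtain ⟨a, ha⟩ := hx
  obtain ⟨Ω₀, hΩ₀mem, hΩ₀min⟩ :=
    hKc.exists_isMinOn ⟨a, ha.le⟩ hB.2.1.continuousOn
  have hF₀ : F Ω₀ = x := key Ω₀ hΩ₀mem (fun Ω' h => hΩ₀min h)
  constructor
  · constructor
    · rintro ⟨heq, hmin⟩
      refine ⟨heq.le, fun Ω h => ?_⟩
      exact le_trans (hmin Ω₀ hF₀) (hΩ₀min h)
    · rintro ⟨hle, hmin⟩
      exact ⟨key Ωstar hle hmin, fun Ω h => hmin Ω h.le⟩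
  · rintro ⟨hle, hmin⟩
    exact key Ωstar hle hmin
end

section
/- Let (X, δ) be a metric space and F, J : X → ℝ with I := F(X), satisfying hypotheses (A)–(D): (A) X is nonempty and compact; (B) F and J are continuous on X and neither is constant; (C) for every Ω ∈ X there exist ε_Ω > 0 and a continuous map Ψ_Ω : [inf I, sup I] ∩ (F(Ω)−ε_Ω, F(Ω)+ε_Ω) → X with Ψ_Ω(F(Ω)) = Ω and F(Ψ_Ω(x)) = x for all x in this set; (D) for every Ω ∈ X with F(Ω) < sup I and every r > 0 there exists Ω' ∈ X with δ(Ω,Ω') < r and J(Ω') < J(Ω). Define f(x) := min{ J(Ω) : Ω ∈ X, F(Ω) = x } for x ∈ I. Then for every x ∈ I, a point Ω* ∈ X solves min{ J(Ω) : Ω ∈ X, F(Ω) = x } if and only if it solves min{ F(Ω) : Ω ∈ X, J(Ω) = f(x) }. -/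
open Set

/-- Under hypotheses (A)–(D), with `f(x) = min { J(Ω) : F(Ω) = x }`, a point solves
`min { J(Ω) : F(Ω) = x }` iff it solves `min { F(Ω) : J(Ω) = f(x) }`. -/
theorem equivalence_J_min_F_min {X : Type*} [MetricSpace X] (F J : X → ℝ)
    (hA : Nonempty X ∧ CompactSpace X)
    (hB : Continuous F ∧ Continuous J ∧ (∃ a b : X, F a ≠ F b) ∧ (∃ a b : X, J a ≠ J b))
    (hC : ∀ Ω : X, ∃ ε > (0 : ℝ), ∃ Ψ : ℝ → X,
      ContinuousOn Ψ (Icc (sInf (range F)) (sSup (range F)) ∩ Ioo (F Ω - ε) (F Ω + ε)) ∧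
      Ψ (F Ω) = Ω ∧
      ∀ x ∈ Icc (sInf (range F)) (sSup (range F)) ∩ Ioo (F Ω - ε) (F Ω + ε),
        F (Ψ x) = x)
    (hD : ∀ Ω : X, F Ω < sSup (range F) → ∀ r > (0 : ℝ), ∃ Ω' : X,
      dist Ω Ω' < r ∧ J Ω' < J Ω) :
    ∀ x ∈ range F, ∀ Ωstar : X,
      (F Ωstar = x ∧ ∀ Ω : X, F Ω = x → J Ωstar ≤ J Ω) ↔
      (J Ωstar = sInf (J '' {Ω : X | F Ω = x}) ∧
        ∀ Ω : X, J Ω = sInf (J '' {Ω' : X | F Ω' = x}) → F Ωstar ≤ F Ω) := by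
  obtain ⟨hne, hcomp⟩ := hA
  obtain ⟨hF, hJ, -, -⟩ := hB
  haveI := hcomp
  have hbddF : BddAbove (range F) := (isCompact_range hF).bddAbove
  -- minimizer of J over the sublevel set {F ≤ x} lies on the level set {F = x}
  have hKmin : ∀ x ∈ range F, ∃ Ω₀ : X, F Ω₀ = x ∧ ∀ Ω : X, F Ω ≤ x → J Ω₀ ≤ J Ω := by
    intro x hx
    have hKcl : IsClosed {Ω : X | F Ω ≤ x} := isClosed_le hF continuous_const
    have hKc : IsCompact {Ω : X | F Ω ≤ x} := hKcl.isCompact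
    obtain ⟨Ωx, hΩx⟩ := hx
    have hKne : ({Ω : X | F Ω ≤ x}).Nonempty := ⟨Ωx, le_of_eq hΩx⟩
    obtain ⟨Ω₀, hΩ₀K, hmin⟩ := hKc.exists_isMinOn hKne hJ.continuousOn
    have hmin' : ∀ Ω : X, F Ω ≤ x → J Ω₀ ≤ J Ω := fun Ω hΩ => isMinOn_iff.mp hmin Ω hΩ
    refine ⟨Ω₀, ?_, hmin'⟩
    by_contra hne'
    have hlt : F Ω₀ < x := lt_of_le_of_ne hΩ₀K hne'
    have hsup : F Ω₀ < sSup (range F) :=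
      lt_of_lt_of_le hlt (le_csSup hbddF ⟨Ωx, hΩx⟩)
    obtain ⟨r, hr, hball⟩ := Metric.continuous_iff.mp hF Ω₀ (x - F Ω₀) (by linarith)
    obtain ⟨Ω', hd, hJ'⟩ := hD Ω₀ hsup r hr
    have hdist : dist (F Ω') (F Ω₀) < x - F Ω₀ := hball Ω' (by rwa [dist_comm])
    have hFΩ' : F Ω' ≤ x := by
      have := abs_lt.mp (by rwa [Real.dist_eq] at hdist)
      linarith [this.2]
    exact absurd (hmin' Ω' hFΩ') (not_le.mpr hJ')
  -- the minimum over each level set is attained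
  have hlevelmin : ∀ x ∈ range F, ∃ Ωm : X, F Ωm = x ∧
      J Ωm = sInf (J '' {Ω : X | F Ω = x}) ∧ ∀ Ω : X, F Ω = x → J Ωm ≤ J Ω := by
    intro x hx
    have hLcl : IsClosed {Ω : X | F Ω = x} := isClosed_eq hF continuous_const
    have hLc : IsCompact {Ω : X | F Ω = x} := hLcl.isCompact
    obtain ⟨Ωx, hΩx⟩ := hx
    have hLne : ({Ω : X | F Ω = x}).Nonempty := ⟨Ωx, hΩx⟩
    obtain ⟨Ωm, hΩmL, hmin⟩ := hLc.exists_isMinOn hLne hJ.continuousOn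
    have hmin' : ∀ Ω : X, F Ω = x → J Ωm ≤ J Ω := fun Ω hΩ => isMinOn_iff.mp hmin Ω hΩ
    refine ⟨Ωm, hΩmL, le_antisymm ?_ ?_, hmin'⟩
    · exact le_csInf (hLne.image J) (by rintro y ⟨a, ha, rfl⟩; exact hmin' a ha)
    · exact csInf_le ⟨J Ωm, by rintro y ⟨a, ha, rfl⟩; exact hmin' a ha⟩
        (mem_image_of_mem J hΩmL)
  -- key: any Ω achieving the minimal value f(x) satisfies x ≤ F Ω
  have key : ∀ x ∈ range F, ∀ Ω : X,
      J Ω = sInf (J '' {Ω' : X | F Ω' = x}) → x ≤ F Ω := by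
    intro x hx Ω hΩ
    by_contra h
    push_neg at h
    obtain ⟨Ωz, hFz, hJz, hminz⟩ := hlevelmin (F Ω) (mem_range_self Ω)
    have hJzΩ : J Ωz ≤ J Ω := hminz Ω rfl
    have hzsup : F Ωz < sSup (range F) := by
      rw [hFz]; exact lt_of_lt_of_le h (le_csSup hbddF hx)
    obtain ⟨r, hr, hball⟩ := Metric.continuous_iff.mp hF Ωz (x - F Ω) (by linarith)
    obtain ⟨Ω', hd, hJ'⟩ := hD Ωz hzsup r hr
    have hdist : dist (F Ω') (F Ωz) < x - F Ω := hball Ω' (by rwa [dist_comm])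
    have hFΩ' : F Ω' ≤ x := by
      have := abs_lt.mp (by rwa [Real.dist_eq] at hdist)
      rw [hFz] at this
      linarith [this.2]
    obtain ⟨Ω₀, hF₀, hmin₀⟩ := hKmin x hx
    obtain ⟨Ωm, hFm, hJm, hminm⟩ := hlevelmin x hx
    have h1 : sInf (J '' {Ω' : X | F Ω' = x}) ≤ J Ω₀ := by
      rw [← hJm]; exact hminm Ω₀ hF₀
    have h2 : J Ω₀ ≤ J Ω' := hmin₀ Ω' hFΩ'
    rw [hΩ] at hJzΩ
    linarith
  intro x hx Ωstar
  obtain ⟨Ωm, hFm, hJm, hminm⟩ := hlevelmin x hx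
  constructor
  · rintro ⟨hFs, hmins⟩
    refine ⟨?_, fun Ω hΩ => ?_⟩
    · rw [← hJm]
      exact le_antisymm (hmins Ωm hFm) (hminm Ωstar hFs)
    · rw [hFs]
      exact key x hx Ω hΩ
  · rintro ⟨hJs, hFmin⟩
    have hge : x ≤ F Ωstar := key x hx Ωstar hJs
    have hle : F Ωstar ≤ F Ωm := hFmin Ωm hJm
    have hFs : F Ωstar = x := le_antisymm (hFm ▸ hle) hge
    refine ⟨hFs, fun Ω hΩ => ?_⟩
    rw [hJs, ← hJm]
    exact hminm Ω hΩ
end
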